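/- arXiv:2311.04399 — 3 statements merged into one kernel-verified Lean document; each statement's English description precedes it below -/
import Mathlib

section
/- Let n ≥ 1 and 0 < λ ≤ Λ, and let F be a concave function on the n×n real symmetric matrices that is uniformly elliptic, i.e., 𝒫⁻(X−Y) ≤ F(X) − F(Y) ≤ 𝒫⁺(X−Y) for all symmetric X, Y. Let C₂ > 0 and δ₁ ∈ (0,1) be the constants (depending only on n, λ, Λ) from the interior L_{δ₁} estimate for parabolic subsolutions. Let f and v be functions on B_{6√n} × (0,1) such that all partial derivatives of v of order at most 4 in x and at most 3 in t, and of f of order at most 2 in (x,t), exist and are continuous, and suppose v_t(x,t) − F(D²v(x,t)) = f(x,t) for all (x,t) ∈ B_{6√n} × (0,1). Then for every unit vector e ∈ ℝⁿ, writing w = ∂²v/∂e² (the second directional derivative in direction e) and g = ∂²f/∂e², if g ∈ L_{n+1}(B_{6√n}×(0,1)) and w is bounded, then ‖w_t‖_{L_{δ₁}(Q₁×(1/3,2/3))} + ‖|D²w|‖_{L_{δ₁}(Q₁×(1/3,2/3))} ≤ C₂(‖g‖_{L_{n+1}(B_{6√n}×(0,1))} + sup_{B_{6√n}×(0,1)}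 |w|); and the same conclusion holds with ∂²/∂e² replaced by ∂²/∂t². -/
open MeasureTheory Metric Set ENNReal RealInnerProductSpace

noncomputable section

/-- The Pucci maximal operator `𝒫⁺`: for a symmetric matrix with eigenvalues `μᵢ`,
`𝒫⁺(M) = Λ ∑ max(μᵢ,0) − λ ∑ max(−μᵢ,0)` (junk value `0` on non-symmetric matrices). -/
def pucciSup {n : ℕ} (lam Lam : ℝ) (M : Matrix (Fin n) (Fin n) ℝ) : ℝ :=
  if h : M.IsHermitian then
    Lam * ∑ i, max (h.eigenvalues i) 0 - lam * ∑ i, max (-h.eigenvalues i) 0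
  else 0

/-- The Pucci minimal operator `𝒫⁻`: for a symmetric matrix with eigenvalues `μᵢ`,
`𝒫⁻(M) = λ ∑ max(μᵢ,0) − Λ ∑ max(−μᵢ,0)` (junk value `0` on non-symmetric matrices). -/
def pucciInf {n : ℕ} (lam Lam : ℝ) (M : Matrix (Fin n) (Fin n) ℝ) : ℝ :=
  if h : M.IsHermitian then
    lam * ∑ i, max (h.eigenvalues i) 0 - Lam * ∑ i, max (-h.eigenvalues i) 0
  else 0

/-- `|M|`: the sum of the absolute values of the eigenvalues of a symmetric matrix
(junk value `0` on non-symmetric matrices). -/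
def matAbs {n : ℕ} (M : Matrix (Fin n) (Fin n) ℝ) : ℝ :=
  if h : M.IsHermitian then ∑ i, |h.eigenvalues i| else 0

/-- The Hessian matrix `D²u(x)` of second-order partial derivatives. -/
def hess {n : ℕ} (u : EuclideanSpace ℝ (Fin n) → ℝ) (x : EuclideanSpace ℝ (Fin n)) :
    Matrix (Fin n) (Fin n) ℝ :=
  fun i j =>
    fderiv ℝ (fun y => fderiv ℝ u y (EuclideanSpace.single j 1)) x (EuclideanSpace.single i 1)

/-- `Q_r`: the open cube of side length `r` centered at the origin. -/
def cube (n : ℕ) (r : ℝ) : Set (EuclideanSpace ℝ (Fin n)) := {x | ∀ i, |x i| < r / 2}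

/-- `ℝ≥0∞`-valued `L_p` quasinorm `(∫_E |g|^p)^{1/p}` w.r.t. Lebesgue measure. -/
def lpE {α : Type*} [MeasureSpace α] (p : ℝ) (E : Set α) (g : α → ℝ) : ℝ≥0∞ :=
  (∫⁻ z in E, ENNReal.ofReal (|g z| ^ p)) ^ (1 / p)

/-- Second directional derivative `∂²v/∂e²` in the spatial direction `e`. -/
def dir2 {n : ℕ} (v : EuclideanSpace ℝ (Fin n) → ℝ → ℝ) (e : EuclideanSpace ℝ (Fin n))
    (x : EuclideanSpace ℝ (Fin n)) (t : ℝ) : ℝ :=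
  fderiv ℝ (fun y => fderiv ℝ (fun z => v z t) y e) x e

/-- Second time derivative `∂²v/∂t²`. -/
def time2 {n : ℕ} (v : EuclideanSpace ℝ (Fin n) → ℝ → ℝ)
    (x : EuclideanSpace ℝ (Fin n)) (t : ℝ) : ℝ :=
  deriv (deriv (v x)) t

/-!
Since `F` is only concave, `v_t - F(D²v) = f` is not differentiated but replaced by second
difference quotients along a direction `d` (a spatial `e`, or time). Midpoint concavity and
ellipticity give `F X₁ + F X₂ - 2 F X₀ ≤ 2 (F ((X₁ + X₂) / 2) - F X₀) ≤ 𝒫⁺(X₁ + X₂ - 2 X₀)`,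
hence `Δ²_d v_t ≤ Δ²_d f + 𝒫⁺(Δ²_d D²v)`, and in the limit `w_t - 𝒫⁺(D²w) ≤ g` for
`w = ∂²_d v`, `g = ∂²_d f`. The limit needs the continuity of `𝒫⁺` on symmetric matrices, which
follows from the Ky Fan formula `tr M⁺ = max {tr (P M) : 0 ≤ P ≤ 1}`, and the commutation of `∂ₜ`
with spatial derivatives. So `w` is a subsolution to which the interior `L_{δ₁}` estimate applies.
-/

open Filter Topology

namespace Matrix

lemma PosSemidef.apply_le_one {ι : Type*} [DecidableEq ι] {P : Matrix ι ι ℝ}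
    (hP1 : (1 - P).PosSemidef) (i : ι) : P i i ≤ 1 := by
  simpa [sub_nonneg] using hP1.diag_nonneg (i := i)

variable {ι : Type*} [Fintype ι] [DecidableEq ι]

def tracePosPart (M : Matrix ι ι ℝ) : ℝ :=
  if h : M.IsHermitian then ∑ i, max (h.eigenvalues i) 0 else 0

def unitIntervalTraces (M : Matrix ι ι ℝ) : Set ℝ :=
  {x | ∃ P : Matrix ι ι ℝ, P.PosSemidef ∧ (1 - P).PosSemidef ∧ (P * M).trace = x}

/-- Test `P` against `eᵢ ± eⱼ`. -/
lemma PosSemidef.abs_apply_le_one {P : Matrix ι ι ℝ} (hP : P.PosSemidef)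
    (hP1 : (1 - P).PosSemidef) (i j : ι) : |P i j| ≤ 1 := by
  have hsymm : P j i = P i j := by simpa using congrFun (congrFun hP.1 i) j
  have hi := hP1.apply_le_one i
  have hj := hP1.apply_le_one j
  rcases eq_or_ne i j with rfl | hij
  · exact abs_le.2 ⟨by linarith [hP.diag_nonneg (i := i)], hi⟩
  have hplus := hP.dotProduct_mulVec_nonneg (Pi.single i 1 + Pi.single j 1)
  have hminus := hP.dotProduct_mulVec_nonneg (Pi.single i 1 - Pi.single j 1)
  simp [dotProduct, mulVec, Pi.single_apply, Finset.sum_add_distrib, Finset.sum_sub_distrib,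
    add_mul, mul_add, sub_mul, mul_sub] at hplus hminus
  exact abs_le.2 ⟨by linarith, by linarith⟩

lemma sum_max_mem_unitIntervalTraces {U : Matrix ι ι ℝ} (hU : U ∈ unitaryGroup ι ℝ)
    (d : ι → ℝ) : ∑ i, max (d i) 0 ∈ unitIntervalTraces (U * diagonal d * Uᴴ) := by
  have hUU : U * Uᴴ = 1 := mem_unitaryGroup_iff.1 hU
  have hUU' : Uᴴ * U = 1 := mem_unitaryGroup_iff'.1 hU
  -- `P` projects onto the eigenvectors with positive eigenvalue
  set p : ι → ℝ := fun i => if 0 < d i then 1 else 0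
  have hp : ∀ q : ι → ℝ, (∀ i, q i = 0 ∨ q i = 1) → (U * diagonal q * Uᴴ).PosSemidef :=
    fun q hq => (PosSemidef.diagonal fun i => by rcases hq i with h | h <;> simp [h])
      |>.mul_mul_conjTranspose_same U
  refine ⟨U * diagonal p * Uᴴ, hp p fun i => by by_cases h : 0 < d i <;> simp [p, h], ?_, ?_⟩
  · rw [show 1 - U * diagonal p * Uᴴ = U * diagonal (fun i => 1 - p i) * Uᴴ by
      rw [← diagonal_sub, diagonal_one, Matrix.mul_sub, Matrix.sub_mul, Matrix.mul_one, hUU]]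
    exact hp _ fun i => by by_cases h : 0 < d i <;> simp [p, h]
  · rw [show U * diagonal p * Uᴴ * (U * diagonal d * Uᴴ) = U * (diagonal p * diagonal d) * Uᴴ by
        simp only [Matrix.mul_assoc, ← Matrix.mul_assoc Uᴴ U, hUU', Matrix.one_mul],
      trace_mul_cycle, hUU', Matrix.one_mul, diagonal_mul_diagonal, trace_diagonal]
    refine Finset.sum_congr rfl fun i _ => ?_
    by_cases h : 0 < d i
    · simp [p, h, h.le]
    · simp [p, h, not_lt.1 h]

lemma trace_mul_le_sum_max {U : Matrix ι ι ℝ} (hU : U ∈ unitaryGroup ι ℝ) (d : ι → ℝ)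
    {P : Matrix ι ι ℝ} (hP : P.PosSemidef) (hP1 : (1 - P).PosSemidef) :
    (P * (U * diagonal d * Uᴴ)).trace ≤ ∑ i, max (d i) 0 := by
  have hUU' : Uᴴ * U = 1 := mem_unitaryGroup_iff'.1 hU
  have hQ1 : (1 - Uᴴ * P * U).PosSemidef := by
    rw [show 1 - Uᴴ * P * U = Uᴴ * (1 - P) * U by
      rw [Matrix.mul_sub, Matrix.sub_mul, Matrix.mul_one, hUU']]
    exact hP1.conjTranspose_mul_mul_same U
  rw [show P * (U * diagonal d * Uᴴ) = P * U * diagonal d * Uᴴ by simp only [Matrix.mul_assoc],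
    trace_mul_cycle, show Uᴴ * (P * U) * diagonal d = Uᴴ * P * U * diagonal d by
      simp only [Matrix.mul_assoc]]
  simp only [trace, diag, mul_diagonal]
  refine Finset.sum_le_sum fun i _ => ?_
  have h0 : 0 ≤ (Uᴴ * P * U) i i := (hP.conjTranspose_mul_mul_same U).diag_nonneg
  rcases le_or_gt (d i) 0 with h | h
  · exact (mul_nonpos_of_nonneg_of_nonpos h0 h).trans (le_max_right _ _)
  · exact (mul_le_of_le_one_left h.le (hQ1.apply_le_one i)).trans (le_max_left _ _)

lemma isGreatest_unitIntervalTraces {U : Matrix ι ι ℝ} (hU : U ∈ unitaryGroup ι ℝ)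
    (d : ι → ℝ) : IsGreatest (unitIntervalTraces (U * diagonal d * Uᴴ)) (∑ i, max (d i) 0) :=
  ⟨sum_max_mem_unitIntervalTraces hU d, fun _ ⟨_, hP, hP1, hx⟩ =>
    hx ▸ trace_mul_le_sum_max hU d hP hP1⟩

lemma IsHermitian.eq_unitary_mul_diagonal {M : Matrix ι ι ℝ} (hM : M.IsHermitian) :
    ∃ U ∈ unitaryGroup ι ℝ, M = U * diagonal hM.eigenvalues * Uᴴ := by
  refine ⟨hM.eigenvectorUnitary, (hM.eigenvectorUnitary).2, ?_⟩
  conv_lhs => rw [hM.spectral_theorem]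
  simp [Unitary.conjStarAlgAut_apply, star_eq_conjTranspose]

lemma IsHermitian.isGreatest_tracePosPart {M : Matrix ι ι ℝ} (hM : M.IsHermitian) :
    IsGreatest (unitIntervalTraces M) (tracePosPart M) := by
  obtain ⟨U, hU, hMU⟩ := hM.eq_unitary_mul_diagonal
  rw [tracePosPart, dif_pos hM]
  conv_lhs => rw [hMU]
  exact isGreatest_unitIntervalTraces hU _

lemma IsHermitian.tracePosPart_neg {M : Matrix ι ι ℝ} (hM : M.IsHermitian) :
    tracePosPart (-M) = ∑ i, max (-hM.eigenvalues i) 0 := by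
  obtain ⟨U, hU, hMU⟩ := hM.eq_unitary_mul_diagonal
  have hneg : -M = U * diagonal (fun i => -hM.eigenvalues i) * Uᴴ := by
    rw [← diagonal_neg, Matrix.mul_neg, Matrix.neg_mul, ← hMU]
  refine hM.neg.isGreatest_tracePosPart.unique ?_
  rw [hneg]
  exact isGreatest_unitIntervalTraces hU _

lemma tracePosPart_add_le {A B : Matrix ι ι ℝ} (hA : A.IsHermitian) (hB : B.IsHermitian) :
    tracePosPart (A + B) ≤ tracePosPart A + tracePosPart B := by
  obtain ⟨P, hP, hP1, hPAB⟩ := (hA.add hB).isGreatest_tracePosPart.1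
  rw [← hPAB, Matrix.mul_add, trace_add]
  exact add_le_add (hA.isGreatest_tracePosPart.2 ⟨P, hP, hP1, rfl⟩)
    (hB.isGreatest_tracePosPart.2 ⟨P, hP, hP1, rfl⟩)

lemma tracePosPart_smul {c : ℝ} (hc : 0 ≤ c) {M : Matrix ι ι ℝ} (hM : M.IsHermitian) :
    tracePosPart (c • M) = c * tracePosPart M := by
  have hcM : (c • M).IsHermitian := hM.smul (IsSelfAdjoint.all c)
  have hscale : ∀ P : Matrix ι ι ℝ, (P * (c • M)).trace = c * (P * M).trace := fun P => by
    rw [Matrix.mul_smul, trace_smul, smul_eq_mul]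
  obtain ⟨P, hP, hP1, hPM⟩ := hcM.isGreatest_tracePosPart.1
  obtain ⟨Q, hQ, hQ1, hQM⟩ := hM.isGreatest_tracePosPart.1
  apply le_antisymm
  · rw [← hPM, hscale]
    exact mul_le_mul_of_nonneg_left (hM.isGreatest_tracePosPart.2 ⟨P, hP, hP1, rfl⟩) hc
  · rw [← hQM, ← hscale]
    exact hcM.isGreatest_tracePosPart.2 ⟨Q, hQ, hQ1, rfl⟩

lemma tracePosPart_le_sum_abs {M : Matrix ι ι ℝ} (hM : M.IsHermitian) :
    tracePosPart M ≤ ∑ i, ∑ j, |M i j| := by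
  obtain ⟨P, hP, hP1, hPM⟩ := hM.isGreatest_tracePosPart.1
  rw [← hPM, Finset.sum_comm]
  simp only [trace, diag, mul_apply]
  refine Finset.sum_le_sum fun i _ => Finset.sum_le_sum fun j _ => ?_
  calc P i j * M j i ≤ |P i j| * |M j i| := by rw [← abs_mul]; exact le_abs_self _
    _ ≤ |M j i| := mul_le_of_le_one_left (abs_nonneg _) (hP.abs_apply_le_one hP1 i j)

lemma continuousOn_tracePosPart :
    ContinuousOn (tracePosPart (ι := ι)) {M | M.IsHermitian} := by
  intro M hM
  set g : Matrix ι ι ℝ → ℝ := fun X => ∑ i, ∑ j, |(X - M) i j|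
  have hg : Tendsto g (𝓝[{M | M.IsHermitian}] M) (𝓝 0) := by
    have h := (show Continuous g by fun_prop).tendsto M
    rw [show g M = 0 by simp [g]] at h
    exact h.mono_left nhdsWithin_le_nhds
  have hgneg : ∀ X, g X = ∑ i, ∑ j, |(M - X) i j| := fun X =>
    Finset.sum_congr rfl fun i _ => Finset.sum_congr rfl fun j _ => abs_sub_comm _ _
  refine tendsto_of_tendsto_of_tendsto_of_le_of_le' (by simpa using tendsto_const_nhds.sub hg)
    (by simpa using tendsto_const_nhds.add hg) ?_ ?_
  · filter_upwards [self_mem_nhdsWithin] with X hX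
    have h := tracePosPart_add_le hX (hM.sub hX)
    rw [add_sub_cancel] at h
    linarith [tracePosPart_le_sum_abs (hM.sub hX), hgneg X]
  · filter_upwards [self_mem_nhdsWithin] with X hX
    have h := tracePosPart_add_le hM (hX.sub hM)
    rw [add_sub_cancel] at h
    linarith [tracePosPart_le_sum_abs (hX.sub hM)]

end Matrix

section Pucci

variable {n : ℕ} {lam Lam : ℝ}

lemma pucciSup_eq_tracePosPart {M : Matrix (Fin n) (Fin n) ℝ} (hM : M.IsHermitian) :
    pucciSup lam Lam M = Lam * M.tracePosPart - lam * (-M).tracePosPart := by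
  rw [pucciSup, dif_pos hM, hM.tracePosPart_neg, Matrix.tracePosPart, dif_pos hM]

lemma pucciSup_smul {c : ℝ} (hc : 0 ≤ c) {M : Matrix (Fin n) (Fin n) ℝ} (hM : M.IsHermitian) :
    pucciSup lam Lam (c • M) = c * pucciSup lam Lam M := by
  rw [pucciSup_eq_tracePosPart (hM.smul (IsSelfAdjoint.all c)), pucciSup_eq_tracePosPart hM,
    ← smul_neg, Matrix.tracePosPart_smul hc hM, Matrix.tracePosPart_smul hc hM.neg]
  ring

lemma continuousOn_pucciSup :
    ContinuousOn (pucciSup (n := n) lam Lam) {M | M.IsHermitian} := by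
  have hneg : ContinuousOn (fun M : Matrix (Fin n) (Fin n) ℝ => (-M).tracePosPart)
      {M | M.IsHermitian} :=
    Matrix.continuousOn_tracePosPart.comp continuous_neg.continuousOn fun M hM => hM.neg
  refine ((continuousOn_const.mul Matrix.continuousOn_tracePosPart).sub
    (continuousOn_const.mul hneg)).congr fun M hM => pucciSup_eq_tracePosPart hM

lemma ConcaveOn.second_difference_le_pucciSup {F : Matrix (Fin n) (Fin n) ℝ → ℝ}
    (hF : ConcaveOn ℝ {M | M.IsHermitian} F)
    (hFP : ∀ X Y : Matrix (Fin n) (Fin n) ℝ, X.IsHermitian → Y.IsHermitian →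
      F X - F Y ≤ pucciSup lam Lam (X - Y))
    {X₁ X₂ X₀ : Matrix (Fin n) (Fin n) ℝ} (h₁ : X₁.IsHermitian) (h₂ : X₂.IsHermitian)
    (h₀ : X₀.IsHermitian) {c : ℝ} (hc : 0 ≤ c) :
    c * (F X₁ + F X₂ - 2 * F X₀) ≤ pucciSup lam Lam (c • (X₁ + X₂ - (2 : ℝ) • X₀)) := by
  set Xm := (1 / 2 : ℝ) • X₁ + (1 / 2 : ℝ) • X₂
  have hXm : Xm.IsHermitian :=
    (h₁.smul (IsSelfAdjoint.all _)).add (h₂.smul (IsSelfAdjoint.all _))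
  have hconc : (1 / 2 : ℝ) * F X₁ + (1 / 2 : ℝ) * F X₂ ≤ F Xm :=
    hF.2 h₁ h₂ (by norm_num) (by norm_num) (by norm_num)
  have hXc : c • (X₁ + X₂ - (2 : ℝ) • X₀) = (2 * c) • (Xm - X₀) := by
    simp only [Xm, smul_sub, smul_add, smul_smul]
    congr 2 <;> ring_nf
  rw [hXc, pucciSup_smul (by positivity) (hXm.sub h₀)]
  nlinarith [hFP Xm X₀ hXm h₀]

end Pucci

section SecondDifference

def secondDiffQuot {β : Type*} [AddCommGroup β] [Module ℝ β] (g : ℝ → β) (h : ℝ) : β :=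
  (h ^ 2)⁻¹ • (g h + g (-h) - (2 : ℝ) • g 0)

lemma eventually_nhdsGT_and_neg {P : ℝ → Prop} (hP : ∀ᶠ s in 𝓝 0, P s) :
    ∀ᶠ h in 𝓝[>] 0, P h ∧ P (-h) ∧ P 0 :=
  ((hP.and ((continuous_neg.tendsto' 0 0 neg_zero).eventually hP)).filter_mono
    nhdsWithin_le_nhds).mono fun _ h => ⟨h.1, h.2, hP.self_of_nhds⟩

/-- By L'Hôpital, the limit is that of `(g' (t + h) - g' (t - h)) / 2h`, a symmetric difference
quotient of `g'`. -/
lemma tendsto_secondDiffQuot {g g' : ℝ → ℝ} {t c : ℝ} (hg : ∀ᶠ τ in 𝓝 t, HasDerivAt g (g' τ) τ)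
    (hg' : HasDerivAt g' c t) :
    Tendsto (secondDiffQuot fun s => g (t + s)) (𝓝[>] 0) (𝓝 c) := by
  set φ : ℝ → ℝ := fun h => g (t + h) + g (t - h)
  set k : ℝ → ℝ := fun h => g' (t + h) - g' (t - h)
  have hφ : ∀ᶠ h in 𝓝 0, HasDerivAt φ (k h) h := by
    have hplus : Tendsto (t + ·) (𝓝 0) (𝓝 t) := by
      simpa using (continuous_const_add t).tendsto 0
    have hminus : Tendsto (t - ·) (𝓝 0) (𝓝 t) := by
      simpa using ((continuous_sub_left t).tendsto 0)
    filter_upwards [hplus.eventually hg, hminus.eventually hg] with h hp hm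
    exact ((hp.comp_const_add t h).add (hm.comp_const_sub t h)).congr_deriv (by ring)
  have hk : HasDerivAt k (c + c) 0 := by
    have hp := (show HasDerivAt g' c (t + 0) by simpa using hg').comp_const_add t 0
    have hm := (show HasDerivAt g' c (t - 0) by simpa using hg').comp_const_sub t 0
    exact (hp.sub hm).congr_deriv (by ring)
  have hslope : Tendsto (fun h => k h / (2 * h)) (𝓝[>] 0) (𝓝 c) := by
    have := hk.tendsto_slope_zero_right.div_const 2
    rw [add_self_div_two] at this
    refine this.congr fun h => ?_
    simp only [k, zero_add, add_zero, sub_zero, sub_self, smul_eq_mul]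
    field_simp
  have hnum : Tendsto (fun h => φ h - φ 0) (𝓝[>] 0) (𝓝 0) := by
    simpa using (hφ.self_of_nhds.continuousAt.tendsto.sub_const (φ 0)).mono_left
      (nhdsWithin_le_nhds (s := Ioi 0))
  have hden : Tendsto (fun h : ℝ => h ^ 2) (𝓝[>] 0) (𝓝 0) := by
    simpa using ((continuous_pow 2).tendsto (0 : ℝ)).mono_left (nhdsWithin_le_nhds (s := Ioi 0))
  have hlim := HasDerivAt.lhopital_zero_nhdsGT (f := fun h => φ h - φ 0) (g := fun h => h ^ 2)
    ((hφ.filter_mono nhdsWithin_le_nhds).mono fun h hh => hh.sub_const (φ 0))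
    (Eventually.of_forall fun h => by simpa using hasDerivAt_pow 2 h)
    (eventually_nhdsWithin_of_forall fun h (hh : 0 < h) => by positivity) hnum hden hslope
  refine hlim.congr fun h => ?_
  simp only [secondDiffQuot, φ, smul_eq_mul, add_zero, sub_zero, ← sub_eq_add_neg]
  ring

end SecondDifference

lemma le_add_pucciSup_of_tendsto_secondDiffQuot {n : ℕ} {lam Lam : ℝ}
    {F : Matrix (Fin n) (Fin n) ℝ → ℝ} (hF : ConcaveOn ℝ {M | M.IsHermitian} F)
    (hFP : ∀ X Y : Matrix (Fin n) (Fin n) ℝ, X.IsHermitian → Y.IsHermitian →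
      F X - F Y ≤ pucciSup lam Lam (X - Y))
    {φ ψ : ℝ → ℝ} {H : ℝ → Matrix (Fin n) (Fin n) ℝ} {a b : ℝ} {M : Matrix (Fin n) (Fin n) ℝ}
    (hH : ∀ᶠ s in 𝓝 0, (H s).IsHermitian) (hφψ : ∀ᶠ s in 𝓝 0, φ s = ψ s + F (H s))
    (hφ : Tendsto (secondDiffQuot φ) (𝓝[>] 0) (𝓝 a))
    (hψ : Tendsto (secondDiffQuot ψ) (𝓝[>] 0) (𝓝 b))
    (hHM : Tendsto (secondDiffQuot H) (𝓝[>] 0) (𝓝 M)) :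
    a ≤ b + pucciSup lam Lam M := by
  have hHquot : ∀ᶠ h in 𝓝[>] 0, (secondDiffQuot H h).IsHermitian :=
    (eventually_nhdsGT_and_neg hH).mono fun h ⟨h₁, h₂, h₀⟩ =>
      ((h₁.add h₂).sub (h₀.smul (IsSelfAdjoint.all _))).smul (IsSelfAdjoint.all _)
  have hM : M.IsHermitian :=
    (isClosed_eq continuous_id.matrix_conjTranspose continuous_id).mem_of_tendsto hHM hHquot
  have hP := (continuousOn_pucciSup (lam := lam) (Lam := Lam) M hM).tendsto.comp
    (tendsto_nhdsWithin_iff.2 ⟨hHM, hHquot⟩)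
  refine le_of_tendsto_of_tendsto hφ (hψ.add hP) ?_
  filter_upwards [eventually_nhdsGT_and_neg (hH.and hφψ)] with h ⟨⟨h₁, e₁⟩, ⟨h₂, e₂⟩, ⟨h₀, e₀⟩⟩
  have := hF.second_difference_le_pucciSup hFP h₁ h₂ h₀ (c := (h ^ 2)⁻¹) (by positivity)
  simp only [Function.comp, secondDiffQuot, smul_eq_mul, e₁, e₂, e₀]
  linarith

section IteratedDirDeriv

variable {E F : Type*} [NormedAddCommGroup E] [NormedSpace ℝ E]
  [NormedAddCommGroup F] [NormedSpace ℝ F] {U : Set E}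

/-- `iteratedDirDeriv [a₁, …, aₖ] u = ∂_{a₁} ⋯ ∂_{aₖ} u`, where `∂_a g y = fderiv ℝ g y a`. -/
def iteratedDirDeriv (l : List E) (u : E → F) : E → F :=
  l.foldr (fun a g y => fderiv ℝ g y a) u

@[simp] lemma iteratedDirDeriv_nil (u : E → F) : iteratedDirDeriv [] u = u := rfl

lemma ContDiffOn.iteratedDirDeriv (hU : IsOpen U) {k : ℕ} {l : List E} {u : E → F}
    (hu : ContDiffOn ℝ (k + l.length : ℕ) u U) : ContDiffOn ℝ k (iteratedDirDeriv l u) U := by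
  induction l generalizing k with
  | nil => simpa using hu
  | cons a l ih =>
    have h := (ih (k := k + 1) (by simpa [add_assoc, add_comm 1] using hu)).fderiv_of_isOpen hU
      (m := k) (by simp)
    exact (ContinuousLinearMap.apply ℝ F a).contDiff.comp_contDiffOn h

lemma iteratedDirDeriv_eq_iteratedFDeriv (hU : IsOpen U) {l : List E} {u : E → F}
    (hu : ContDiffOn ℝ l.length u U) {x : E} (hx : x ∈ U) :
    iteratedDirDeriv l u x = iteratedFDeriv ℝ l.length u x l.get := by
  induction l generalizing x with
  | nil => simp
  | cons a l ih =>
    have hdiff : DifferentiableAt ℝ (iteratedFDeriv ℝ l.length u) x :=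
      (hu.contDiffAt (hU.mem_nhds hx)).differentiableAt_iteratedFDeriv (by norm_cast; simp)
    have heq : iteratedDirDeriv l u =ᶠ[𝓝 x] fun y => iteratedFDeriv ℝ l.length u y l.get :=
      eventually_of_mem (hU.mem_nhds hx) fun y hy => ih (hu.of_le (by simp)) hy
    change fderiv ℝ (iteratedDirDeriv l u) x a = _
    rw [heq.fderiv_eq, fderiv_continuousMultilinear_apply_const hdiff]
    exact (iteratedFDeriv_succ_apply_left (a :: l).get).symm

lemma hasDerivAt_comp_line {g : E → F} {x a : E} {s : ℝ} (hg : DifferentiableAt ℝ g (x + s • a)) :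
    HasDerivAt (fun s => g (x + s • a)) (fderiv ℝ g (x + s • a) a) s :=
  hg.hasFDerivAt.comp_hasDerivAt s (by simpa using ((hasDerivAt_id s).smul_const a).const_add x)

lemma iteratedDirDeriv_pair_comm (hU : IsOpen U) {g : E → F} (hg : ContDiffOn ℝ 2 g U) {x : E}
    (hx : x ∈ U) (a b : E) : iteratedDirDeriv [a, b] g x = iteratedDirDeriv [b, a] g x := by
  rw [iteratedDirDeriv_eq_iteratedFDeriv (l := [a, b]) hU hg hx,
    iteratedDirDeriv_eq_iteratedFDeriv (l := [b, a]) hU hg hx]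
  exact (iteratedFDeriv_two_apply (𝕜 := ℝ) g x [a, b].get).trans
    (((hg.contDiffAt (hU.mem_nhds hx)).isSymmSndFDerivAt (by simp) a b).trans
      (iteratedFDeriv_two_apply (𝕜 := ℝ) g x [b, a].get).symm)

lemma iteratedDirDeriv_perm (hU : IsOpen U) {l l' : List E} (hl : l.Perm l') {u : E → F}
    (hu : ContDiffOn ℝ l.length u U) {x : E} (hx : x ∈ U) :
    iteratedDirDeriv l u x = iteratedDirDeriv l' u x := by
  induction hl generalizing x with
  | nil => rfl
  | cons a _ ih =>
    have heq : iteratedDirDeriv _ u =ᶠ[𝓝 x] iteratedDirDeriv _ u :=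
      eventually_of_mem (hU.mem_nhds hx) fun y hy => ih (hu.of_le (by simp)) hy
    exact congrArg (fun L : E →L[ℝ] F => L a) (heq.fderiv_eq (𝕜 := ℝ))
  | swap a b l =>
    have hlen : (2 + l.length : ℕ) = (b :: a :: l).length := by simp; omega
    exact iteratedDirDeriv_pair_comm hU (ContDiffOn.iteratedDirDeriv hU (hlen ▸ hu)) hx b a
  | trans h₁ _ ih₁ ih₂ => exact (ih₁ hu hx).trans (ih₂ (h₁.length_eq ▸ hu) hx)

lemma tendsto_secondDiffQuot_comp_line (hU : IsOpen U) {u : E → ℝ} (hu : ContDiffOn ℝ 2 u U)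
    {x : E} (hx : x ∈ U) (a : E) :
    Tendsto (secondDiffQuot fun s => u (x + s • a)) (𝓝[>] 0) (𝓝 (iteratedDirDeriv [a, a] u x)) := by
  have hline : ∀ᶠ s in 𝓝 (0 : ℝ), x + s • a ∈ U :=
    (hU.preimage (by fun_prop)).mem_nhds (by simpa using hx)
  have hdiff : ∀ {g : E → ℝ}, ContDiffOn ℝ 1 g U → ∀ {y}, y ∈ U → DifferentiableAt ℝ g y :=
    fun hg _ hy => (hg.differentiableOn one_ne_zero).differentiableAt (hU.mem_nhds hy)
  have hu₁ : ContDiffOn ℝ 1 (iteratedDirDeriv [a] u) U := ContDiffOn.iteratedDirDeriv hU hu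
  have h₂ : HasDerivAt (fun s : ℝ => iteratedDirDeriv [a] u (x + s • a))
      (iteratedDirDeriv [a, a] u x) 0 := by
    have h := hasDerivAt_comp_line (g := iteratedDirDeriv [a] u) (a := a) (s := 0)
      (hdiff hu₁ (by rwa [zero_smul, add_zero]))
    rw [zero_smul, add_zero] at h
    exact h
  simpa using tendsto_secondDiffQuot (t := 0)
    (hline.mono fun s hs => hasDerivAt_comp_line (hdiff (hu.of_le (by norm_num)) hs)) h₂

end IteratedDirDeriv

section TimeDerivative

lemma tendstoLocallyUniformlyOn_of_forall_exists_Ioo {α β : Type*} [PseudoMetricSpace α]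
    [PseudoMetricSpace β] {G F : ℝ → α → β} {S : Set ℝ} {J : Set α} (hS : S ∈ 𝓝 0)
    (hG : ContinuousOn (Function.uncurry G) (S ×ˢ J))
    (hF : ∀ᶠ h in 𝓝[>] 0, ∀ τ ∈ J, ∃ ξ ∈ Ioo 0 h, F h τ = G ξ τ) :
    TendstoLocallyUniformlyOn F (G 0) (𝓝[>] 0) J := by
  rw [Metric.tendstoLocallyUniformlyOn_iff]
  intro ε hε τ hτ
  obtain ⟨δ, hδ, hGδ⟩ := Metric.continuousWithinAt_iff.1
    (hG (0, τ) ⟨mem_of_mem_nhds hS, hτ⟩) (ε / 2) (half_pos hε)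
  obtain ⟨r, hr, hrS⟩ := Metric.mem_nhds_iff.1 hS
  refine ⟨J ∩ ball τ δ, inter_mem_nhdsWithin J (ball_mem_nhds τ hδ), ?_⟩
  filter_upwards [hF, Ioo_mem_nhdsGT (lt_min hδ hr)] with h hFh hh y hy
  obtain ⟨ξ, hξ, hFξ⟩ := hFh y hy.1
  have hξr : |ξ| < min δ r := by rw [abs_of_pos hξ.1]; exact hξ.2.trans hh.2
  have h₀ : dist (G 0 y) (G 0 τ) < ε / 2 := hGδ (x := (0, y)) ⟨mem_of_mem_nhds hS, hy.1⟩ <| by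
    simpa [Prod.dist_eq] using hy.2
  have hξ' : dist (G ξ y) (G 0 τ) < ε / 2 :=
    hGδ (x := (ξ, y)) ⟨hrS (by simpa using hξr.trans_le (min_le_right _ _)), hy.1⟩ <| by
      simpa [Prod.dist_eq, Real.dist_eq] using ⟨hξr.trans_le (min_le_left _ _), hy.2⟩
  rw [hFξ]
  linarith [dist_triangle_right (G 0 y) (G ξ y) (G 0 τ)]

variable {E : Type*} [NormedAddCommGroup E] [NormedSpace ℝ E] {U : Set E} {J : Set ℝ}

/-- `τ ↦ ∂ₐ V(x, τ)` is the limit of `(V(x + h a, τ) - V(x, τ)) / h`, whose `τ`-derivatives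
converge locally uniformly: by the mean value theorem they are values of the jointly continuous
`∂ₐ W` near `(x, τ)`. -/
theorem hasDerivAt_fderiv_apply_of_continuousOn (hU : IsOpen U) (hJ : IsOpen J)
    {V W : E → ℝ → ℝ} (a : E) (hVW : ∀ y ∈ U, ∀ τ ∈ J, HasDerivAt (V y) (W y τ) τ)
    (hV : ∀ τ ∈ J, DifferentiableOn ℝ (V · τ) U) (hW : ∀ τ ∈ J, DifferentiableOn ℝ (W · τ) U)
    (hWc : ContinuousOn (fun p : E × ℝ => fderiv ℝ (W · p.2) p.1 a) (U ×ˢ J))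
    {x : E} (hx : x ∈ U) {t : ℝ} (ht : t ∈ J) :
    HasDerivAt (fun τ => fderiv ℝ (V · τ) x a) (fderiv ℝ (W · t) x a) t := by
  set S := (fun s : ℝ => x + s • a) ⁻¹' U
  have hS : S ∈ 𝓝 0 := (hU.preimage (by fun_prop)).mem_nhds (by simpa [S] using hx)
  obtain ⟨r, hr, hrS⟩ := Metric.mem_nhds_iff.1 hS
  have hmem : ∀ {h}, h ∈ Ioo 0 r → ∀ s ∈ Icc 0 h, x + s • a ∈ U := fun hh s hs =>
    hrS (by simpa [abs_of_nonneg hs.1] using hs.2.trans_lt hh.2)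
  have hline : ∀ {g : E → ℝ} {s : ℝ}, DifferentiableOn ℝ g U → x + s • a ∈ U →
      HasDerivAt (fun s => g (x + s • a)) (fderiv ℝ g (x + s • a) a) s := fun hg hs =>
    hasDerivAt_comp_line (hg.differentiableAt (hU.mem_nhds hs))
  refine hasDerivAt_of_tendstoLocallyUniformlyOn hJ (l := 𝓝[>] 0)
    (g := fun τ => fderiv ℝ (V · τ) x a) (g' := fun τ => fderiv ℝ (W · τ) x a)
    (f := fun h τ => h⁻¹ * (V (x + h • a) τ - V x τ))
    (f' := fun h τ => h⁻¹ * (W (x + h • a) τ - W x τ)) ?_ ?_ ?_ ht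
  · have hG : ContinuousOn (fun p : ℝ × ℝ => fderiv ℝ (W · p.2) (x + p.1 • a) a) (S ×ˢ J) :=
      hWc.comp (f := fun p : ℝ × ℝ => (x + p.1 • a, p.2)) (by fun_prop)
        fun p hp => ⟨hp.1, hp.2⟩
    have hF : ∀ᶠ h in 𝓝[>] 0, ∀ τ ∈ J, ∃ ξ ∈ Ioo 0 h,
        h⁻¹ * (W (x + h • a) τ - W x τ) = fderiv ℝ (W · τ) (x + ξ • a) a := by
      filter_upwards [Ioo_mem_nhdsGT hr] with h hh τ hτ
      obtain ⟨ξ, hξ, hslope⟩ := exists_hasDerivAt_eq_slope (fun s => W (x + s • a) τ)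
        (fun s => fderiv ℝ (W · τ) (x + s • a) a) hh.1
        (fun s hs => (hline (hW τ hτ) (hmem hh s hs)).continuousAt.continuousWithinAt)
        (fun s hs => hline (hW τ hτ) (hmem hh s (Ioo_subset_Icc_self hs)))
      refine ⟨ξ, hξ, ?_⟩
      simp only [hslope, zero_smul, add_zero, sub_zero]
      ring
    simpa using tendstoLocallyUniformlyOn_of_forall_exists_Ioo hS
      (G := fun ξ τ => fderiv ℝ (W · τ) (x + ξ • a) a) hG hF
  · filter_upwards [Ioo_mem_nhdsGT hr] with h hh τ hτ
    exact ((hVW _ (hmem hh h ⟨hh.1.le, le_rfl⟩) τ hτ).sub (hVW x hx τ hτ)).const_mul h⁻¹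
  · intro τ hτ
    simpa using (hline (hV τ hτ) (s := 0) (by simpa using hx)).tendsto_slope_zero_right

theorem hasDerivAt_iteratedDirDeriv (hU : IsOpen U) (hJ : IsOpen J) {V W : E → ℝ → ℝ}
    (hVW : ∀ y ∈ U, ∀ τ ∈ J, HasDerivAt (V y) (W y τ) τ) (l : List E)
    (hV : ∀ τ ∈ J, ContDiffOn ℝ l.length (V · τ) U)
    (hW : ∀ τ ∈ J, ContDiffOn ℝ l.length (W · τ) U)
    (hWc : ∀ k, ContinuousOn (fun p : E × ℝ => iteratedDirDeriv (l.drop k) (W · p.2) p.1)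
      (U ×ˢ J))
    {x : E} (hx : x ∈ U) {t : ℝ} (ht : t ∈ J) :
    HasDerivAt (fun τ => iteratedDirDeriv l (V · τ) x) (iteratedDirDeriv l (W · t) x) t := by
  induction l generalizing x t with
  | nil => exact hVW x hx t ht
  | cons a l ih =>
    have hdiff : ∀ {Z : E → ℝ → ℝ}, (∀ τ ∈ J, ContDiffOn ℝ (a :: l).length (Z · τ) U) →
        ∀ τ ∈ J, DifferentiableOn ℝ (iteratedDirDeriv l (Z · τ)) U := fun hZ τ hτ =>
      (ContDiffOn.iteratedDirDeriv hU (k := 1) (by simpa [add_comm] using hZ τ hτ)).differentiableOn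
        one_ne_zero
    exact hasDerivAt_fderiv_apply_of_continuousOn hU hJ a
      (fun y hy τ hτ => ih (fun τ hτ => (hV τ hτ).of_le (by simp))
        (fun τ hτ => (hW τ hτ).of_le (by simp)) (fun k => hWc (k + 1)) hy hτ)
      (hdiff hV) (hdiff hW) (hWc 0) hx ht

end TimeDerivative

section Parabolic

variable {E : Type*} [NormedAddCommGroup E] [NormedSpace ℝ E] {U : Set E} {J : Set ℝ}

structure IsSmoothInSpaceTime (v : E → ℝ → ℝ) (U : Set E) (J : Set ℝ) : Prop where
  hasDerivAt : ∀ m < 3, ∀ y ∈ U, ∀ τ ∈ J,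
    HasDerivAt (iteratedDeriv m (v y)) (iteratedDeriv (m + 1) (v y) τ) τ
  contDiffOn : ∀ m ≤ 3, ∀ τ ∈ J, ContDiffOn ℝ 4 (fun y => iteratedDeriv m (v y) τ) U
  continuousOn : ∀ m ≤ 3, ∀ l : List E, l.length ≤ 4 → ContinuousOn
    (fun p : E × ℝ => iteratedDirDeriv l (fun y => iteratedDeriv m (v y) p.2) p.1) (U ×ˢ J)

lemma isSmoothInSpaceTime_of_continuousOn_iteratedFDeriv (hU : IsOpen U) (hJ : IsOpen J)
    {v : E → ℝ → ℝ} (hvt : ∀ x ∈ U, ContDiffOn ℝ 3 (v x) J)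
    (hvx : ∀ m ≤ 3, ∀ t ∈ J, ContDiffOn ℝ 4 (fun y => iteratedDeriv m (v y) t) U)
    (hvc : ∀ k m : ℕ, k ≤ 4 → m ≤ 3 → ContinuousOn
      (fun p : E × ℝ => iteratedFDeriv ℝ k (fun y => iteratedDeriv m (v y) p.2) p.1) (U ×ˢ J)) :
    IsSmoothInSpaceTime v U J where
  hasDerivAt m hm y hy τ hτ := by
    have h := (((hvt y hy).contDiffAt (hJ.mem_nhds hτ)).differentiableAt_iteratedFDeriv
      (by exact_mod_cast hm)).continuousMultilinear_apply_const (fun _ => (1 : ℝ))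
    rw [iteratedDeriv_succ]
    simpa [← iteratedDeriv_eq_iteratedFDeriv] using h.hasDerivAt
  contDiffOn := hvx
  continuousOn m hm l hl :=
    ((ContinuousMultilinearMap.apply ℝ (fun _ => E) ℝ l.get).continuous.comp_continuousOn
      (hvc l.length m hl hm)).congr fun p hp =>
        iteratedDirDeriv_eq_iteratedFDeriv hU ((hvx m hm p.2 hp.2).of_le (by exact_mod_cast hl))
          hp.1

lemma IsSmoothInSpaceTime.hasDerivAt_iteratedDirDeriv {v : E → ℝ → ℝ}
    (hv : IsSmoothInSpaceTime v U J) (hU : IsOpen U) (hJ : IsOpen J) {m : ℕ} (hm : m < 3)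
    {l : List E} (hl : l.length ≤ 4) {x : E} (hx : x ∈ U) {t : ℝ} (ht : t ∈ J) :
    HasDerivAt (fun τ => iteratedDirDeriv l (fun y => iteratedDeriv m (v y) τ) x)
      (iteratedDirDeriv l (fun y => iteratedDeriv (m + 1) (v y) t) x) t :=
  _root_.hasDerivAt_iteratedDirDeriv hU hJ (hv.hasDerivAt m hm) l
    (fun τ hτ => (hv.contDiffOn m hm.le τ hτ).of_le (by exact_mod_cast hl))
    (fun τ hτ => (hv.contDiffOn (m + 1) hm τ hτ).of_le (by exact_mod_cast hl))
    (fun k => hv.continuousOn (m + 1) hm (l.drop k) (by simp; omega)) hx ht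

lemma IsSmoothInSpaceTime.contDiffOn_slice {v : E → ℝ → ℝ} (hv : IsSmoothInSpaceTime v U J) :
    ∀ τ ∈ J, ContDiffOn ℝ 4 (fun y => v y τ) U := fun τ hτ => by
  simpa using hv.contDiffOn 0 (by norm_num) τ hτ

end Parabolic

section Euclidean

variable {n : ℕ} {U : Set (EuclideanSpace ℝ (Fin n))} {J : Set ℝ}

lemma isHermitian_hess (hU : IsOpen U) {u : EuclideanSpace ℝ (Fin n) → ℝ}
    (hu : ContDiffOn ℝ 2 u U) {x : EuclideanSpace ℝ (Fin n)} (hx : x ∈ U) :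
    (hess u x).IsHermitian :=
  Matrix.IsHermitian.ext fun _ _ => iteratedDirDeriv_pair_comm hU hu hx _ _

structure IsPucciSubsolution (lam Lam : ℝ) (U : Set (EuclideanSpace ℝ (Fin n))) (J : Set ℝ)
    (g w : EuclideanSpace ℝ (Fin n) → ℝ → ℝ) : Prop where
  differentiableAt : ∀ p ∈ U ×ˢ J, DifferentiableAt ℝ (w p.1) p.2
  continuousOn_deriv : ContinuousOn (fun p => deriv (w p.1) p.2) (U ×ˢ J)
  contDiffOn : ∀ t ∈ J, ContDiffOn ℝ 2 (fun y => w y t) U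
  continuousOn_hess : ContinuousOn (fun p => hess (fun y => w y p.2) p.1) (U ×ˢ J)
  deriv_sub_pucciSup_le : ∀ p ∈ U ×ˢ J,
    deriv (w p.1) p.2 - pucciSup lam Lam (hess (fun y => w y p.2) p.1) ≤ g p.1 p.2

variable {lam Lam : ℝ} {F : Matrix (Fin n) (Fin n) ℝ → ℝ} {v f : EuclideanSpace ℝ (Fin n) → ℝ → ℝ}

lemma IsSmoothInSpaceTime.hasDerivAt_dir2 (hv : IsSmoothInSpaceTime v U J) (hU : IsOpen U)
    (hJ : IsOpen J) (e : EuclideanSpace ℝ (Fin n)) {x : EuclideanSpace ℝ (Fin n)} (hx : x ∈ U)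
    {t : ℝ} (ht : t ∈ J) :
    HasDerivAt (dir2 v e x) (iteratedDirDeriv [e, e] (fun y => deriv (v y) t) x) t := by
  have h := hv.hasDerivAt_iteratedDirDeriv hU hJ (m := 0) (l := [e, e]) (by norm_num) (by simp)
    hx ht
  simp only [iteratedDeriv_zero, zero_add, iteratedDeriv_one] at h
  exact h

lemma IsSmoothInSpaceTime.tendsto_secondDiffQuot_hess_comp_line (hv : IsSmoothInSpaceTime v U J)
    (hU : IsOpen U) (e : EuclideanSpace ℝ (Fin n)) {x : EuclideanSpace ℝ (Fin n)} (hx : x ∈ U)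
    {t : ℝ} (ht : t ∈ J) :
    Tendsto (secondDiffQuot fun s => hess (fun y => v y t) (x + s • e)) (𝓝[>] 0)
      (𝓝 (hess (fun y => dir2 v e y t) x)) := by
  refine tendsto_pi_nhds.2 fun i => tendsto_pi_nhds.2 fun j => ?_
  set l := [EuclideanSpace.single i (1 : ℝ), EuclideanSpace.single j 1]
  have h := tendsto_secondDiffQuot_comp_line hU (ContDiffOn.iteratedDirDeriv hU (l := l)
    ((hv.contDiffOn_slice t ht).of_le (by norm_num [l]))) hx e
  have hperm : iteratedDirDeriv [e, e] (iteratedDirDeriv l (fun y => v y t)) x =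
      hess (fun y => dir2 v e y t) x i j :=
    iteratedDirDeriv_perm hU (List.perm_append_comm (l₁ := [e, e]) (l₂ := l))
      ((hv.contDiffOn_slice t ht).of_le (by norm_num [l])) hx
  rw [hperm] at h
  exact h

lemma IsSmoothInSpaceTime.deriv_dir2_sub_pucciSup_le (hv : IsSmoothInSpaceTime v U J)
    (hU : IsOpen U) (hJ : IsOpen J) (hF : ConcaveOn ℝ {M | M.IsHermitian} F)
    (hFP : ∀ X Y : Matrix (Fin n) (Fin n) ℝ, X.IsHermitian → Y.IsHermitian →
      F X - F Y ≤ pucciSup lam Lam (X - Y))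
    (hf : ContDiffOn ℝ 2 (fun p : EuclideanSpace ℝ (Fin n) × ℝ => f p.1 p.2) (U ×ˢ J))
    (heq : ∀ p ∈ U ×ˢ J, deriv (v p.1) p.2 - F (hess (fun y => v y p.2) p.1) = f p.1 p.2)
    (e : EuclideanSpace ℝ (Fin n)) {x : EuclideanSpace ℝ (Fin n)} (hx : x ∈ U) {t : ℝ}
    (ht : t ∈ J) :
    deriv (dir2 v e x) t - pucciSup lam Lam (hess (fun y => dir2 v e y t) x) ≤ dir2 f e x t := by
  have hline : ∀ᶠ s in 𝓝 (0 : ℝ), x + s • e ∈ U :=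
    (hU.preimage (by fun_prop)).mem_nhds (by simpa using hx)
  have hvt : ContDiffOn ℝ 2 (fun y => deriv (v y) t) U := by
    simpa using (hv.contDiffOn 1 (by norm_num) t ht).of_le (by norm_num)
  have hft : ContDiffOn ℝ 2 (fun y => f y t) U :=
    hf.comp (by fun_prop : ContDiff ℝ 2 fun y => (y, t)).contDiffOn fun y hy => ⟨hy, ht⟩
  have key := le_add_pucciSup_of_tendsto_secondDiffQuot hF hFP
    (hline.mono fun s hs => isHermitian_hess hU ((hv.contDiffOn_slice t ht).of_le (by norm_num)) hs)
    (hline.mono fun s hs => by linarith [heq (x + s • e, t) ⟨hs, ht⟩])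
    (tendsto_secondDiffQuot_comp_line hU hvt hx e) (tendsto_secondDiffQuot_comp_line hU hft hx e)
    (hv.tendsto_secondDiffQuot_hess_comp_line hU e hx ht)
  rw [(hv.hasDerivAt_dir2 hU hJ e hx ht).deriv]
  exact sub_le_iff_le_add.2 key

theorem IsSmoothInSpaceTime.isPucciSubsolution_dir2 (hv : IsSmoothInSpaceTime v U J)
    (hU : IsOpen U) (hJ : IsOpen J) (hF : ConcaveOn ℝ {M | M.IsHermitian} F)
    (hFP : ∀ X Y : Matrix (Fin n) (Fin n) ℝ, X.IsHermitian → Y.IsHermitian →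
      F X - F Y ≤ pucciSup lam Lam (X - Y))
    (hf : ContDiffOn ℝ 2 (fun p : EuclideanSpace ℝ (Fin n) × ℝ => f p.1 p.2) (U ×ˢ J))
    (heq : ∀ p ∈ U ×ˢ J, deriv (v p.1) p.2 - F (hess (fun y => v y p.2) p.1) = f p.1 p.2)
    (e : EuclideanSpace ℝ (Fin n)) :
    IsPucciSubsolution lam Lam U J (dir2 f e) (dir2 v e) where
  differentiableAt p hp := (hv.hasDerivAt_dir2 hU hJ e hp.1 hp.2).differentiableAt
  continuousOn_deriv := by
    refine (hv.continuousOn 1 (by norm_num) [e, e] (by simp)).congr fun p hp => ?_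
    simpa using (hv.hasDerivAt_dir2 hU hJ e hp.1 hp.2).deriv
  contDiffOn t ht :=
    ContDiffOn.iteratedDirDeriv hU (l := [e, e]) ((hv.contDiffOn_slice t ht).of_le (by norm_num))
  continuousOn_hess := by
    refine continuousOn_pi.2 fun i => continuousOn_pi.2 fun j => ?_
    have h := hv.continuousOn 0 (by norm_num)
      [EuclideanSpace.single i 1, EuclideanSpace.single j 1, e, e] (by simp)
    simp only [iteratedDeriv_zero] at h
    exact h
  deriv_sub_pucciSup_le p hp := hv.deriv_dir2_sub_pucciSup_le hU hJ hF hFP hf heq e hp.1 hp.2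

lemma time2_eq_iteratedDeriv (v : EuclideanSpace ℝ (Fin n) → ℝ → ℝ) (y : EuclideanSpace ℝ (Fin n)) :
    time2 v y = iteratedDeriv 2 (v y) := by
  funext τ
  simp [time2, iteratedDeriv_succ]

lemma IsSmoothInSpaceTime.hasDerivAt_time2 (hv : IsSmoothInSpaceTime v U J)
    {x : EuclideanSpace ℝ (Fin n)} (hx : x ∈ U) {t : ℝ} (ht : t ∈ J) :
    HasDerivAt (time2 v x) (iteratedDeriv 3 (v x) t) t := by
  rw [time2_eq_iteratedDeriv]
  exact hv.hasDerivAt 2 (by norm_num) x hx t ht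

lemma IsSmoothInSpaceTime.tendsto_secondDiffQuot_hess_comp_add (hv : IsSmoothInSpaceTime v U J)
    (hU : IsOpen U) (hJ : IsOpen J) {x : EuclideanSpace ℝ (Fin n)} (hx : x ∈ U) {t : ℝ}
    (ht : t ∈ J) :
    Tendsto (secondDiffQuot fun s => hess (fun y => v y (t + s)) x) (𝓝[>] 0)
      (𝓝 (hess (fun y => time2 v y t) x)) := by
  refine tendsto_pi_nhds.2 fun i => tendsto_pi_nhds.2 fun j => ?_
  set l := [EuclideanSpace.single i (1 : ℝ), EuclideanSpace.single j 1]
  have hnear : ∀ᶠ τ in 𝓝 t, τ ∈ J := hJ.mem_nhds ht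
  have h := tendsto_secondDiffQuot
    (hnear.mono fun τ hτ =>
      hv.hasDerivAt_iteratedDirDeriv hU hJ (m := 0) (l := l) (by norm_num) (by simp [l]) hx hτ)
    (hv.hasDerivAt_iteratedDirDeriv hU hJ (m := 1) (l := l) (by norm_num) (by simp [l]) hx ht)
  simp only [iteratedDeriv_zero, Nat.reduceAdd, ← time2_eq_iteratedDeriv] at h
  exact h

lemma IsSmoothInSpaceTime.deriv_time2_sub_pucciSup_le (hv : IsSmoothInSpaceTime v U J)
    (hU : IsOpen U) (hJ : IsOpen J) (hF : ConcaveOn ℝ {M | M.IsHermitian} F)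
    (hFP : ∀ X Y : Matrix (Fin n) (Fin n) ℝ, X.IsHermitian → Y.IsHermitian →
      F X - F Y ≤ pucciSup lam Lam (X - Y))
    (hf : ContDiffOn ℝ 2 (fun p : EuclideanSpace ℝ (Fin n) × ℝ => f p.1 p.2) (U ×ˢ J))
    (heq : ∀ p ∈ U ×ˢ J, deriv (v p.1) p.2 - F (hess (fun y => v y p.2) p.1) = f p.1 p.2)
    {x : EuclideanSpace ℝ (Fin n)} (hx : x ∈ U) {t : ℝ} (ht : t ∈ J) :
    deriv (time2 v x) t - pucciSup lam Lam (hess (fun y => time2 v y t) x) ≤ time2 f x t := by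
  have hnear : ∀ᶠ τ in 𝓝 t, τ ∈ J := hJ.mem_nhds ht
  have hshift : ∀ᶠ s in 𝓝 (0 : ℝ), t + s ∈ J :=
    (continuous_const_add t).continuousAt.preimage_mem_nhds (by simpa using hnear)
  have hfx : ContDiffOn ℝ 2 (f x) J :=
    hf.comp (by fun_prop : ContDiff ℝ 2 fun τ => (x, τ)).contDiffOn fun τ hτ => ⟨hx, hτ⟩
  have hφ : Tendsto (secondDiffQuot fun s => deriv (v x) (t + s)) (𝓝[>] 0)
      (𝓝 (iteratedDeriv 3 (v x) t)) :=
    tendsto_secondDiffQuot (g' := iteratedDeriv 2 (v x))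
      (hnear.mono fun τ hτ => by simpa using hv.hasDerivAt 1 (by norm_num) x hx τ hτ)
      (hv.hasDerivAt 2 (by norm_num) x hx t ht)
  have hψ : Tendsto (secondDiffQuot fun s => f x (t + s)) (𝓝[>] 0) (𝓝 (time2 f x t)) :=
    tendsto_secondDiffQuot (hnear.mono fun τ hτ =>
      ((hfx.differentiableOn two_ne_zero).differentiableAt (hJ.mem_nhds hτ)).hasDerivAt)
      ((hfx.deriv_of_isOpen hJ (m := 1) (by norm_num)).differentiableOn one_ne_zero
        |>.differentiableAt (hJ.mem_nhds ht)).hasDerivAt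
  have key := le_add_pucciSup_of_tendsto_secondDiffQuot hF hFP
    (hshift.mono fun s hs =>
      isHermitian_hess hU ((hv.contDiffOn_slice (t + s) hs).of_le (by norm_num)) hx)
    (hshift.mono fun s hs => by linarith [heq (x, t + s) ⟨hx, hs⟩]) hφ hψ
    (hv.tendsto_secondDiffQuot_hess_comp_add hU hJ hx ht)
  rw [(hv.hasDerivAt_time2 hx ht).deriv]
  exact sub_le_iff_le_add.2 key

theorem IsSmoothInSpaceTime.isPucciSubsolution_time2 (hv : IsSmoothInSpaceTime v U J)
    (hU : IsOpen U) (hJ : IsOpen J) (hF : ConcaveOn ℝ {M | M.IsHermitian} F)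
    (hFP : ∀ X Y : Matrix (Fin n) (Fin n) ℝ, X.IsHermitian → Y.IsHermitian →
      F X - F Y ≤ pucciSup lam Lam (X - Y))
    (hf : ContDiffOn ℝ 2 (fun p : EuclideanSpace ℝ (Fin n) × ℝ => f p.1 p.2) (U ×ˢ J))
    (heq : ∀ p ∈ U ×ˢ J, deriv (v p.1) p.2 - F (hess (fun y => v y p.2) p.1) = f p.1 p.2) :
    IsPucciSubsolution lam Lam U J (time2 f) (time2 v) where
  differentiableAt p hp := (hv.hasDerivAt_time2 hp.1 hp.2).differentiableAt
  continuousOn_deriv :=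
    (hv.continuousOn 3 le_rfl [] (by simp)).congr fun p hp => (hv.hasDerivAt_time2 hp.1 hp.2).deriv
  contDiffOn t ht := by
    simpa only [time2_eq_iteratedDeriv] using (hv.contDiffOn 2 (by norm_num) t ht).of_le
      (by norm_num)
  continuousOn_hess := by
    refine continuousOn_pi.2 fun i => continuousOn_pi.2 fun j => ?_
    have h := hv.continuousOn 2 (by norm_num)
      [EuclideanSpace.single i 1, EuclideanSpace.single j 1] (by simp)
    simp only [← time2_eq_iteratedDeriv] at h
    exact h
  deriv_sub_pucciSup_le p hp := hv.deriv_time2_sub_pucciSup_le hU hJ hF hFP hf heq hp.1 hp.2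

end Euclidean

theorem stmt4_general (n : ℕ) (lam Lam : ℝ)
    (C₂ δ₁ : ℝ)
    (hEst : ∀ f v : EuclideanSpace ℝ (Fin n) → ℝ → ℝ,
      (∃ K : ℝ, ∀ p ∈ ball (0 : EuclideanSpace ℝ (Fin n)) (6 * Real.sqrt n) ×ˢ Ioo (0:ℝ) 1,
        |v p.1 p.2| ≤ K) →
      (∀ p ∈ ball (0 : EuclideanSpace ℝ (Fin n)) (6 * Real.sqrt n) ×ˢ Ioo (0:ℝ) 1,
        DifferentiableAt ℝ (v p.1) p.2) →
      ContinuousOn (fun p : EuclideanSpace ℝ (Fin n) × ℝ => deriv (v p.1) p.2)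
        (ball 0 (6 * Real.sqrt n) ×ˢ Ioo (0:ℝ) 1) →
      (∀ t ∈ Ioo (0:ℝ) 1, ContDiffOn ℝ 2 (fun y => v y t) (ball 0 (6 * Real.sqrt n))) →
      ContinuousOn (fun p : EuclideanSpace ℝ (Fin n) × ℝ => hess (fun y => v y p.2) p.1)
        (ball 0 (6 * Real.sqrt n) ×ˢ Ioo (0:ℝ) 1) →
      (∀ p ∈ ball (0 : EuclideanSpace ℝ (Fin n)) (6 * Real.sqrt n) ×ˢ Ioo (0:ℝ) 1,
        deriv (v p.1) p.2 - pucciSup lam Lam (hess (fun y => v y p.2) p.1) ≤ f p.1 p.2) →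
      lpE δ₁ (cube n 1 ×ˢ Ioo (1/3 : ℝ) (2/3)) (fun p => deriv (v p.1) p.2) +
          lpE δ₁ (cube n 1 ×ˢ Ioo (1/3 : ℝ) (2/3))
            (fun p => matAbs (hess (fun y => v y p.2) p.1)) ≤
        ENNReal.ofReal C₂ *
          (lpE ((n : ℝ) + 1) (ball 0 (6 * Real.sqrt n) ×ˢ Ioo (0:ℝ) 1)
              (fun p => f p.1 p.2) +
            ENNReal.ofReal
              (⨆ p ∈ ball (0 : EuclideanSpace ℝ (Fin n)) (6 * Real.sqrt n) ×ˢ Ioo (0:ℝ) 1,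
                |v p.1 p.2|))) :
    ∀ F : Matrix (Fin n) (Fin n) ℝ → ℝ,
      ConcaveOn ℝ {M : Matrix (Fin n) (Fin n) ℝ | M.IsHermitian} F →
      (∀ X Y : Matrix (Fin n) (Fin n) ℝ, X.IsHermitian → Y.IsHermitian →
        pucciInf lam Lam (X - Y) ≤ F X - F Y ∧ F X - F Y ≤ pucciSup lam Lam (X - Y)) →
      ∀ f v : EuclideanSpace ℝ (Fin n) → ℝ → ℝ,
        -- all partial derivatives of `v` of order at most `4` in `x` and at most `3` in `t`
        -- exist and are continuous:
        (∀ x ∈ ball (0 : EuclideanSpace ℝ (Fin n)) (6 * Real.sqrt n),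
          ContDiffOn ℝ 3 (v x) (Ioo (0:ℝ) 1)) →
        (∀ m : ℕ, m ≤ 3 → ∀ t ∈ Ioo (0:ℝ) 1,
          ContDiffOn ℝ 4 (fun y => iteratedDeriv m (v y) t) (ball 0 (6 * Real.sqrt n))) →
        (∀ k m : ℕ, k ≤ 4 → m ≤ 3 →
          ContinuousOn
            (fun p : EuclideanSpace ℝ (Fin n) × ℝ =>
              iteratedFDeriv ℝ k (fun y => iteratedDeriv m (v y) p.2) p.1)
            (ball 0 (6 * Real.sqrt n) ×ˢ Ioo (0:ℝ) 1)) →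
        -- all partial derivatives of `f` of order at most `2` in `(x,t)` exist and are
        -- continuous:
        ContDiffOn ℝ 2 (fun p : EuclideanSpace ℝ (Fin n) × ℝ => f p.1 p.2)
          (ball 0 (6 * Real.sqrt n) ×ˢ Ioo (0:ℝ) 1) →
        -- the equation `v_t − F(D²v) = f`:
        (∀ p ∈ ball (0 : EuclideanSpace ℝ (Fin n)) (6 * Real.sqrt n) ×ˢ Ioo (0:ℝ) 1,
          deriv (v p.1) p.2 - F (hess (fun y => v y p.2) p.1) = f p.1 p.2) →
        -- conclusion for `w = ∂²v/∂e²`, `g = ∂²f/∂e²` for every unit direction `e`: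
        (∀ e : EuclideanSpace ℝ (Fin n), ‖e‖ = 1 →
          lpE ((n : ℝ) + 1) (ball 0 (6 * Real.sqrt n) ×ˢ Ioo (0:ℝ) 1)
            (fun p => dir2 f e p.1 p.2) < ⊤ →
          (∃ K : ℝ, ∀ p ∈ ball (0 : EuclideanSpace ℝ (Fin n)) (6 * Real.sqrt n) ×ˢ Ioo (0:ℝ) 1,
            |dir2 v e p.1 p.2| ≤ K) →
          lpE δ₁ (cube n 1 ×ˢ Ioo (1/3 : ℝ) (2/3)) (fun p => deriv (dir2 v e p.1) p.2) +
              lpE δ₁ (cube n 1 ×ˢ Ioo (1/3 : ℝ) (2/3))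
                (fun p => matAbs (hess (fun y => dir2 v e y p.2) p.1)) ≤
            ENNReal.ofReal C₂ *
              (lpE ((n : ℝ) + 1) (ball 0 (6 * Real.sqrt n) ×ˢ Ioo (0:ℝ) 1)
                  (fun p => dir2 f e p.1 p.2) +
                ENNReal.ofReal
                  (⨆ p ∈ ball (0 : EuclideanSpace ℝ (Fin n)) (6 * Real.sqrt n) ×ˢ Ioo (0:ℝ) 1,
                    |dir2 v e p.1 p.2|))) ∧
        -- and the same conclusion with `∂²/∂e²` replaced by `∂²/∂t²`:
        (lpE ((n : ℝ) + 1) (ball 0 (6 * Real.sqrt n) ×ˢ Ioo (0:ℝ) 1)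
            (fun p => time2 f p.1 p.2) < ⊤ →
          (∃ K : ℝ, ∀ p ∈ ball (0 : EuclideanSpace ℝ (Fin n)) (6 * Real.sqrt n) ×ˢ Ioo (0:ℝ) 1,
            |time2 v p.1 p.2| ≤ K) →
          lpE δ₁ (cube n 1 ×ˢ Ioo (1/3 : ℝ) (2/3)) (fun p => deriv (time2 v p.1) p.2) +
              lpE δ₁ (cube n 1 ×ˢ Ioo (1/3 : ℝ) (2/3))
                (fun p => matAbs (hess (fun y => time2 v y p.2) p.1)) ≤
            ENNReal.ofReal C₂ *
              (lpE ((n : ℝ) + 1) (ball 0 (6 * Real.sqrt n) ×ˢ Ioo (0:ℝ) 1)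
                  (fun p => time2 f p.1 p.2) +
                ENNReal.ofReal
                  (⨆ p ∈ ball (0 : EuclideanSpace ℝ (Fin n)) (6 * Real.sqrt n) ×ˢ Ioo (0:ℝ) 1,
                    |time2 v p.1 p.2|))) := by
  intro F hF hFE f v hvt hvx hvc hf heq
  have hU : IsOpen (ball (0 : EuclideanSpace ℝ (Fin n)) (6 * Real.sqrt n)) := isOpen_ball
  have hv := isSmoothInSpaceTime_of_continuousOn_iteratedFDeriv hU isOpen_Ioo hvt hvx hvc
  have hFP := fun X Y hX hY => (hFE X Y hX hY).2
  have hEst' := fun g w (hw : IsPucciSubsolution lam Lam _ _ g w) hbd =>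
    hEst g w hbd hw.differentiableAt hw.continuousOn_deriv hw.contDiffOn hw.continuousOn_hess
      hw.deriv_sub_pucciSup_le
  exact ⟨fun e _ _ hbd => hEst' _ _ (hv.isPucciSubsolution_dir2 hU isOpen_Ioo hF hFP hf heq e) hbd,
    fun _ hbd => hEst' _ _ (hv.isPucciSubsolution_time2 hU isOpen_Ioo hF hFP hf heq) hbd⟩

/-- Third/fourth order estimates for concave fully nonlinear parabolic equations:
if `C₂, δ₁` are constants for which the interior `L_{δ₁}` estimate for parabolic
subsolutions holds, then the second directional derivatives (in space, and in time)
of a solution of `v_t − F(D²v) = f` obey the same estimate. -/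
theorem stmt4 (n : ℕ) (hn : 1 ≤ n) (lam Lam : ℝ) (hlam : 0 < lam) (hLam : lam ≤ Lam)
    (C₂ δ₁ : ℝ) (hC₂ : 0 < C₂) (hδ₁ : δ₁ ∈ Ioo (0:ℝ) 1)
    (hEst : ∀ f v : EuclideanSpace ℝ (Fin n) → ℝ → ℝ,
      (∃ K : ℝ, ∀ p ∈ ball (0 : EuclideanSpace ℝ (Fin n)) (6 * Real.sqrt n) ×ˢ Ioo (0:ℝ) 1,
        |v p.1 p.2| ≤ K) →
      (∀ p ∈ ball (0 : EuclideanSpace ℝ (Fin n)) (6 * Real.sqrt n) ×ˢ Ioo (0:ℝ) 1,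
        DifferentiableAt ℝ (v p.1) p.2) →
      ContinuousOn (fun p : EuclideanSpace ℝ (Fin n) × ℝ => deriv (v p.1) p.2)
        (ball 0 (6 * Real.sqrt n) ×ˢ Ioo (0:ℝ) 1) →
      (∀ t ∈ Ioo (0:ℝ) 1, ContDiffOn ℝ 2 (fun y => v y t) (ball 0 (6 * Real.sqrt n))) →
      ContinuousOn (fun p : EuclideanSpace ℝ (Fin n) × ℝ => hess (fun y => v y p.2) p.1)
        (ball 0 (6 * Real.sqrt n) ×ˢ Ioo (0:ℝ) 1) →
      (∀ p ∈ ball (0 : EuclideanSpace ℝ (Fin n)) (6 * Real.sqrt n) ×ˢ Ioo (0:ℝ) 1,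
        deriv (v p.1) p.2 - pucciSup lam Lam (hess (fun y => v y p.2) p.1) ≤ f p.1 p.2) →
      lpE δ₁ (cube n 1 ×ˢ Ioo (1/3 : ℝ) (2/3)) (fun p => deriv (v p.1) p.2) +
          lpE δ₁ (cube n 1 ×ˢ Ioo (1/3 : ℝ) (2/3))
            (fun p => matAbs (hess (fun y => v y p.2) p.1)) ≤
        ENNReal.ofReal C₂ *
          (lpE ((n : ℝ) + 1) (ball 0 (6 * Real.sqrt n) ×ˢ Ioo (0:ℝ) 1)
              (fun p => f p.1 p.2) +
            ENNReal.ofReal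
              (⨆ p ∈ ball (0 : EuclideanSpace ℝ (Fin n)) (6 * Real.sqrt n) ×ˢ Ioo (0:ℝ) 1,
                |v p.1 p.2|))) :
    ∀ F : Matrix (Fin n) (Fin n) ℝ → ℝ,
      ConcaveOn ℝ {M : Matrix (Fin n) (Fin n) ℝ | M.IsHermitian} F →
      (∀ X Y : Matrix (Fin n) (Fin n) ℝ, X.IsHermitian → Y.IsHermitian →
        pucciInf lam Lam (X - Y) ≤ F X - F Y ∧ F X - F Y ≤ pucciSup lam Lam (X - Y)) →
      ∀ f v : EuclideanSpace ℝ (Fin n) → ℝ → ℝ,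
        -- all partial derivatives of `v` of order at most `4` in `x` and at most `3` in `t`
        -- exist and are continuous:
        (∀ x ∈ ball (0 : EuclideanSpace ℝ (Fin n)) (6 * Real.sqrt n),
          ContDiffOn ℝ 3 (v x) (Ioo (0:ℝ) 1)) →
        (∀ m : ℕ, m ≤ 3 → ∀ t ∈ Ioo (0:ℝ) 1,
          ContDiffOn ℝ 4 (fun y => iteratedDeriv m (v y) t) (ball 0 (6 * Real.sqrt n))) →
        (∀ k m : ℕ, k ≤ 4 → m ≤ 3 →
          ContinuousOn
            (fun p : EuclideanSpace ℝ (Fin n) × ℝ =>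
              iteratedFDeriv ℝ k (fun y => iteratedDeriv m (v y) p.2) p.1)
            (ball 0 (6 * Real.sqrt n) ×ˢ Ioo (0:ℝ) 1)) →
        -- all partial derivatives of `f` of order at most `2` in `(x,t)` exist and are
        -- continuous:
        ContDiffOn ℝ 2 (fun p : EuclideanSpace ℝ (Fin n) × ℝ => f p.1 p.2)
          (ball 0 (6 * Real.sqrt n) ×ˢ Ioo (0:ℝ) 1) →
        -- the equation `v_t − F(D²v) = f`:
        (∀ p ∈ ball (0 : EuclideanSpace ℝ (Fin n)) (6 * Real.sqrt n) ×ˢ Ioo (0:ℝ) 1,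
          deriv (v p.1) p.2 - F (hess (fun y => v y p.2) p.1) = f p.1 p.2) →
        -- conclusion for `w = ∂²v/∂e²`, `g = ∂²f/∂e²` for every unit direction `e`:
        (∀ e : EuclideanSpace ℝ (Fin n), ‖e‖ = 1 →
          lpE ((n : ℝ) + 1) (ball 0 (6 * Real.sqrt n) ×ˢ Ioo (0:ℝ) 1)
            (fun p => dir2 f e p.1 p.2) < ⊤ →
          (∃ K : ℝ, ∀ p ∈ ball (0 : EuclideanSpace ℝ (Fin n)) (6 * Real.sqrt n) ×ˢ Ioo (0:ℝ) 1,
            |dir2 v e p.1 p.2| ≤ K) →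
          lpE δ₁ (cube n 1 ×ˢ Ioo (1/3 : ℝ) (2/3)) (fun p => deriv (dir2 v e p.1) p.2) +
              lpE δ₁ (cube n 1 ×ˢ Ioo (1/3 : ℝ) (2/3))
                (fun p => matAbs (hess (fun y => dir2 v e y p.2) p.1)) ≤
            ENNReal.ofReal C₂ *
              (lpE ((n : ℝ) + 1) (ball 0 (6 * Real.sqrt n) ×ˢ Ioo (0:ℝ) 1)
                  (fun p => dir2 f e p.1 p.2) +
                ENNReal.ofReal
                  (⨆ p ∈ ball (0 : EuclideanSpace ℝ (Fin n)) (6 * Real.sqrt n) ×ˢ Ioo (0:ℝ) 1,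
                    |dir2 v e p.1 p.2|))) ∧
        -- and the same conclusion with `∂²/∂e²` replaced by `∂²/∂t²`:
        (lpE ((n : ℝ) + 1) (ball 0 (6 * Real.sqrt n) ×ˢ Ioo (0:ℝ) 1)
            (fun p => time2 f p.1 p.2) < ⊤ →
          (∃ K : ℝ, ∀ p ∈ ball (0 : EuclideanSpace ℝ (Fin n)) (6 * Real.sqrt n) ×ˢ Ioo (0:ℝ) 1,
            |time2 v p.1 p.2| ≤ K) →
          lpE δ₁ (cube n 1 ×ˢ Ioo (1/3 : ℝ) (2/3)) (fun p => deriv (time2 v p.1) p.2) +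
              lpE δ₁ (cube n 1 ×ˢ Ioo (1/3 : ℝ) (2/3))
                (fun p => matAbs (hess (fun y => time2 v y p.2) p.1)) ≤
            ENNReal.ofReal C₂ *
              (lpE ((n : ℝ) + 1) (ball 0 (6 * Real.sqrt n) ×ˢ Ioo (0:ℝ) 1)
                  (fun p => time2 f p.1 p.2) +
                ENNReal.ofReal
                  (⨆ p ∈ ball (0 : EuclideanSpace ℝ (Fin n)) (6 * Real.sqrt n) ×ˢ Ioo (0:ℝ) 1,
                    |time2 v p.1 p.2|))) :=
  stmt4_general n lam Lam C₂ δ₁ hEst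
end
end

section
/- Let n ≥ 1 and 0 < λ < Λ. There exists a constant C₄ > 0 depending only on n, λ, Λ with the following property: let f be continuous and Lebesgue integrable on B₁, and let u ∈ C²(B₁) be such that u and |D²u| are integrable on B₁ and −𝒫⁻(D²u(x)) ≤ f(x) for all x ∈ B₁. Then ∫_{B_{1/2}} |D²u| dx ≤ C₄ (∫_{B₁} |f| dx + ∫_{B₁} |u| dx). -/
open MeasureTheory Metric Set ENNReal RealInnerProductSpace

noncomputable section

/-! For a symmetric matrix `M`, checking eigenvalue by eigenvalue gives
`(Λ - λ)|M| = -2𝒫⁻(M) + (Λ + λ) tr M`, so a subsolution satisfies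
`(Λ - λ)|D²u| ≤ 2f + (Λ + λ)Δu` on `B₁`. Multiply by a cutoff `φ` equal to `1` on `B_{1/2}` and
supported in `B_{3/4}`, integrate, and integrate by parts twice:
`∫ φ Δu = ∫ u Δφ ≤ sup |Δφ| ∫ |u|`. -/

open Filter Topology

section SecondDerivatives

variable {E : Type*} [NormedAddCommGroup E] [NormedSpace ℝ E]

theorem ContDiff.mul_of_contDiffOn_of_tsupport_subset {k : WithTop ℕ∞} {ψ u : E → ℝ} {s : Set E}
    (hψ : ContDiff ℝ k ψ) (hs : IsOpen s) (hψs : tsupport ψ ⊆ s) (hu : ContDiffOn ℝ k u s) :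
    ContDiff ℝ k fun x => ψ x * u x := by
  refine contDiff_iff_contDiffAt.2 fun x => ?_
  by_cases hx : x ∈ s
  · exact hψ.contDiffAt.mul (hu.contDiffAt (hs.mem_nhds hx))
  · have hψx : ψ =ᶠ[𝓝 x] 0 := notMem_tsupport_iff_eventuallyEq.1 fun h => hx (hψs h)
    refine contDiffAt_const (c := (0 : ℝ)).congr_of_eventuallyEq ?_
    filter_upwards [hψx] with y hy
    simp [hy]

theorem ContDiff.contDiff_one_fderiv_apply {w : E → ℝ} (hw : ContDiff ℝ 2 w) (v : E) :
    ContDiff ℝ 1 fun x => fderiv ℝ w x v :=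
  (ContinuousLinearMap.apply ℝ ℝ v).contDiff.comp (hw.fderiv_right (by norm_num))

theorem ContDiff.continuous_fderiv_fderiv_apply {w : E → ℝ} (hw : ContDiff ℝ 2 w) (v : E) :
    Continuous fun x => fderiv ℝ (fun y => fderiv ℝ w y v) x v :=
  ((hw.contDiff_one_fderiv_apply v).continuous_fderiv one_ne_zero).clm_apply continuous_const

variable [FiniteDimensional ℝ E] [MeasurableSpace E] [BorelSpace E] {μ : Measure E}
  [μ.IsAddHaarMeasure]

theorem integral_mul_fderiv_fderiv_comm {p w : E → ℝ} (hp : ContDiff ℝ 2 p) (hw : ContDiff ℝ 2 w)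
    (hpc : HasCompactSupport p) (hwc : HasCompactSupport w) (v : E) :
    ∫ x, p x * fderiv ℝ (fun y => fderiv ℝ w y v) x v ∂μ =
      ∫ x, w x * fderiv ℝ (fun y => fderiv ℝ p y v) x v ∂μ := by
  have hp' := hp.contDiff_one_fderiv_apply v
  have hw' := hw.contDiff_one_fderiv_apply v
  have hdp := (hp.continuous_fderiv two_ne_zero).clm_apply (continuous_const (y := v))
  have hdw := (hw.continuous_fderiv two_ne_zero).clm_apply (continuous_const (y := v))
  rw [integral_mul_fderiv_eq_neg_fderiv_mul_of_integrable
      ((hdp.mul hdw).integrable_of_hasCompactSupport (hpc.fderiv_apply (𝕜 := ℝ) v).mul_right)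
      ((hp.continuous.mul (hw.continuous_fderiv_fderiv_apply v)).integrable_of_hasCompactSupport
        hpc.mul_right)
      ((hp.continuous.mul hdw).integrable_of_hasCompactSupport hpc.mul_right)
      (fun x _ => (hp.differentiable two_ne_zero) x)
      (fun x _ => (hw'.differentiable one_ne_zero) x),
    integral_mul_fderiv_eq_neg_fderiv_mul_of_integrable
      ((hdw.mul hdp).integrable_of_hasCompactSupport (hwc.fderiv_apply (𝕜 := ℝ) v).mul_right)
      ((hw.continuous.mul (hp.continuous_fderiv_fderiv_apply v)).integrable_of_hasCompactSupport
        hwc.mul_right)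
      ((hw.continuous.mul hdp).integrable_of_hasCompactSupport hwc.mul_right)
      (fun x _ => (hw.differentiable two_ne_zero) x)
      (fun x _ => (hp'.differentiable one_ne_zero) x)]
  simp only [mul_comm]

end SecondDerivatives

section Cutoff

variable {E : Type*} [NormedAddCommGroup E] [NormedSpace ℝ E] [HasContDiffBump E]
  [MeasurableSpace E] [OpensMeasurableSpace E] {μ : Measure E} {c : E}

theorem ContDiffBump.integrableOn_mul (φ : ContDiffBump c) {g : E → ℝ} {s : Set E}
    (hg : IntegrableOn g s μ) : IntegrableOn (fun x => φ x * g x) s μ :=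
  hg.bdd_mul (c := 1) φ.continuous.aestronglyMeasurable
    (ae_of_all _ fun x => by rw [Real.norm_eq_abs, abs_of_nonneg φ.nonneg]; exact φ.le_one)

theorem ContDiffBump.setIntegral_ball_rIn_le (φ : ContDiffBump c) {g : E → ℝ} {s : Set E}
    (hs : MeasurableSet s) (hφs : ball c φ.rIn ⊆ s) (hg : IntegrableOn g s μ)
    (hg0 : ∀ x ∈ s, 0 ≤ g x) :
    ∫ x in ball c φ.rIn, g x ∂μ ≤ ∫ x in s, φ x * g x ∂μ := by
  calc ∫ x in ball c φ.rIn, g x ∂μ = ∫ x in ball c φ.rIn, φ x * g x ∂μ := by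
        refine setIntegral_congr_fun measurableSet_ball fun x hx => ?_
        rw [φ.one_of_mem_closedBall (ball_subset_closedBall hx), one_mul]
    _ ≤ ∫ x in s, φ x * g x ∂μ :=
        setIntegral_mono_set (φ.integrableOn_mul hg)
          ((ae_restrict_iff' hs).2 (ae_of_all _ fun x hx => mul_nonneg φ.nonneg (hg0 x hx)))
          hφs.eventuallyLE

end Cutoff

section Pucci

variable {n : ℕ}

theorem matAbs_nonneg (M : Matrix (Fin n) (Fin n) ℝ) : 0 ≤ matAbs M := by
  unfold matAbs
  split
  · exact Finset.sum_nonneg fun i _ => abs_nonneg _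
  · exact le_rfl

theorem Matrix.IsHermitian.abs_trace_le_matAbs {M : Matrix (Fin n) (Fin n) ℝ}
    (hM : M.IsHermitian) : |M.trace| ≤ matAbs M := by
  rw [matAbs, dif_pos hM, hM.trace_eq_sum_eigenvalues]
  simpa using Finset.abs_sum_le_sum_abs _ _

theorem Matrix.IsHermitian.sub_mul_matAbs_eq {M : Matrix (Fin n) (Fin n) ℝ} (hM : M.IsHermitian)
    (lam Lam : ℝ) :
    (Lam - lam) * matAbs M = 2 * -pucciInf lam Lam M + (Lam + lam) * M.trace := by
  rw [matAbs, pucciInf, dif_pos hM, dif_pos hM, hM.trace_eq_sum_eigenvalues]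
  simp only [RCLike.ofReal_real_eq_id, id, Finset.mul_sum, ← Finset.sum_sub_distrib,
    ← Finset.sum_neg_distrib, ← Finset.sum_add_distrib]
  refine Finset.sum_congr rfl fun i _ => ?_
  rcases le_total (hM.eigenvalues i) 0 with h | h
  · rw [abs_of_nonpos h, max_eq_right h, max_eq_left (neg_nonneg.2 h)]; ring
  · rw [abs_of_nonneg h, max_eq_left h, max_eq_right (neg_nonpos.2 h)]; ring

end Pucci

section Hessian

variable {n : ℕ}

local notation "E" => EuclideanSpace ℝ (Fin n)

theorem trace_hess (u : E → ℝ) (x : E) :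
    (hess u x).trace = ∑ i, fderiv ℝ (fun y => fderiv ℝ u y (EuclideanSpace.single i 1)) x
      (EuclideanSpace.single i 1) :=
  rfl

theorem hess_congr_of_eventuallyEq {u v : E → ℝ} {x : E} (h : u =ᶠ[𝓝 x] v) :
    hess u x = hess v x := by
  ext i j
  have h' : (fun y => fderiv ℝ u y (EuclideanSpace.single j 1)) =ᶠ[𝓝 x]
      fun y => fderiv ℝ v y (EuclideanSpace.single j 1) := by
    filter_upwards [h.fderiv (𝕜 := ℝ)] with y hy
    rw [hy]
  simp only [hess, h'.fderiv_eq]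

theorem hess_eq_zero_of_notMem_tsupport {u : E → ℝ} {x : E} (hx : x ∉ tsupport u) :
    hess u x = 0 := by
  rw [hess_congr_of_eventuallyEq (notMem_tsupport_iff_eventuallyEq.1 hx)]
  ext i j
  simp [hess]

theorem hess_apply_eq_fderiv_fderiv {u : E → ℝ} {x : E} (hu : ContDiffAt ℝ 2 u x) (i j : Fin n) :
    hess u x i j =
      fderiv ℝ (fderiv ℝ u) x (EuclideanSpace.single i 1) (EuclideanSpace.single j 1) := by
  rw [hess, fderiv_clm_apply ((hu.fderiv_right le_rfl).differentiableAt one_ne_zero)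
    (differentiableAt_const _)]
  simp

theorem hess_isHermitian {u : E → ℝ} {x : E} (hu : ContDiffAt ℝ 2 u x) :
    (hess u x).IsHermitian := by
  ext i j
  rw [Matrix.conjTranspose_apply, hess_apply_eq_fderiv_fderiv hu, hess_apply_eq_fderiv_fderiv hu]
  simpa using (hu.isSymmSndFDerivAt (by simp) (EuclideanSpace.single i 1)
    (EuclideanSpace.single j 1)).symm

theorem measurable_trace_hess (u : E → ℝ) : Measurable fun x => (hess u x).trace :=
  Finset.measurable_sum _ fun _ _ => measurable_fderiv_apply_const ℝ _ _

theorem ContDiff.continuous_trace_hess {u : E → ℝ} (hu : ContDiff ℝ 2 u) :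
    Continuous fun x => (hess u x).trace :=
  continuous_finsetSum _ fun _ _ => hu.continuous_fderiv_fderiv_apply _

theorem HasCompactSupport.trace_hess {u : E → ℝ} (hu : HasCompactSupport u) :
    HasCompactSupport fun x => (hess u x).trace :=
  hu.mono' fun x hx => by_contra fun h => hx (by simp [hess_eq_zero_of_notMem_tsupport h])

theorem integral_mul_trace_hess_comm {p w : E → ℝ} (hp : ContDiff ℝ 2 p) (hw : ContDiff ℝ 2 w)
    (hpc : HasCompactSupport p) (hwc : HasCompactSupport w) :
    ∫ x, p x * (hess w x).trace = ∫ x, w x * (hess p x).trace := by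
  simp only [trace_hess, Finset.mul_sum]
  rw [integral_finsetSum _ fun i _ => ?_, integral_finsetSum _ fun i _ => ?_]
  · exact Finset.sum_congr rfl fun i _ => integral_mul_fderiv_fderiv_comm hp hw hpc hwc _
  · exact (hw.continuous.mul (hp.continuous_fderiv_fderiv_apply _)).integrable_of_hasCompactSupport
      hwc.mul_right
  · exact (hp.continuous.mul (hw.continuous_fderiv_fderiv_apply _)).integrable_of_hasCompactSupport
      hpc.mul_right

end Hessian

section Estimate

variable {n : ℕ}

local notation "E" => EuclideanSpace ℝ (Fin n)

/-- `u` is only `C²` on the ball, so before integrating by parts it is replaced by `ψ u` for a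
second cutoff `ψ` that equals `1` on a neighbourhood of `tsupport φ`. -/
theorem ContDiffBump.setIntegral_mul_trace_hess {c : E} {R : ℝ} (φ : ContDiffBump c)
    (hR : φ.rOut < R) {u : E → ℝ} (hu : ContDiffOn ℝ 2 u (ball c R)) :
    ∫ x in ball c R, φ x * (hess u x).trace = ∫ x in ball c R, u x * (hess φ x).trace := by
  obtain ⟨r, hφr, hrR⟩ := exists_between hR
  let ψ : ContDiffBump c := ⟨r, (r + R) / 2, φ.rOut_pos.trans hφr, by linarith⟩
  set w : E → ℝ := fun x => ψ x * u x
  have hw : ContDiff ℝ 2 w := ψ.contDiff.mul_of_contDiffOn_of_tsupport_subset isOpen_ball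
    (ψ.tsupport_eq ▸ closedBall_subset_ball (by simp only [ψ]; linarith)) hu
  have hwu : ∀ x ∈ ball c r, w =ᶠ[𝓝 x] u := fun x hx => by
    filter_upwards [isOpen_ball.mem_nhds hx] with y hy
    simp [w, ψ.one_of_mem_closedBall (ball_subset_closedBall hy)]
  have hφr : ∀ x ∉ ball c r, x ∉ tsupport φ := fun x hx h =>
    hx (closedBall_subset_ball hφr (φ.tsupport_eq ▸ h))
  have hrR : ∀ x ∉ ball c R, x ∉ ball c r := fun x hx h => hx (ball_subset_ball hrR.le h)
  calc ∫ x in ball c R, φ x * (hess u x).trace = ∫ x, φ x * (hess w x).trace := by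
        rw [setIntegral_eq_integral_of_forall_compl_eq_zero fun x hx => by
          rw [image_eq_zero_of_notMem_tsupport (hφr x (hrR x hx)), zero_mul]]
        refine integral_congr_ae (ae_of_all _ fun x => ?_)
        beta_reduce
        by_cases hx : x ∈ ball c r
        · rw [hess_congr_of_eventuallyEq (hwu x hx)]
        · rw [image_eq_zero_of_notMem_tsupport (hφr x hx), zero_mul, zero_mul]
    _ = ∫ x, w x * (hess φ x).trace :=
        integral_mul_trace_hess_comm φ.contDiff hw φ.hasCompactSupport ψ.hasCompactSupport.mul_right
    _ = ∫ x in ball c R, u x * (hess φ x).trace := by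
        rw [setIntegral_eq_integral_of_forall_compl_eq_zero fun x hx => by
          rw [hess_eq_zero_of_notMem_tsupport (hφr x (hrR x hx)), Matrix.trace_zero, mul_zero]]
        refine integral_congr_ae (ae_of_all _ fun x => ?_)
        beta_reduce
        by_cases hx : x ∈ ball c r
        · rw [(hwu x hx).eq_of_nhds]
        · rw [hess_eq_zero_of_notMem_tsupport (hφr x hx), Matrix.trace_zero, mul_zero, mul_zero]

theorem ContDiffBump.sub_mul_setIntegral_mul_matAbs_hess_le {c : E} (φ : ContDiffBump c)
    {s : Set E} (hs : MeasurableSet s) {lam Lam : ℝ} {f u : E → ℝ}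
    (hu : ∀ x ∈ s, ContDiffAt ℝ 2 u x) (hA : IntegrableOn (fun x => matAbs (hess u x)) s)
    (hf : IntegrableOn f s) (hsub : ∀ x ∈ s, -pucciInf lam Lam (hess u x) ≤ f x) :
    (Lam - lam) * ∫ x in s, φ x * matAbs (hess u x) ≤
      2 * (∫ x in s, |f x|) + (Lam + lam) * ∫ x in s, φ x * (hess u x).trace := by
  have hφA := φ.integrableOn_mul hA
  have hφT : IntegrableOn (fun x => φ x * (hess u x).trace) s := by
    refine hφA.mono' (φ.continuous.measurable.mul (measurable_trace_hess u)).aestronglyMeasurable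
      ((ae_restrict_iff' hs).2 (ae_of_all _ fun x hx => ?_))
    rw [Real.norm_eq_abs, abs_mul, abs_of_nonneg φ.nonneg]
    exact mul_le_mul_of_nonneg_left (hess_isHermitian (hu x hx)).abs_trace_le_matAbs φ.nonneg
  have hpt : ∀ x ∈ s, (Lam - lam) * (φ x * matAbs (hess u x)) ≤
      2 * |f x| + (Lam + lam) * (φ x * (hess u x).trace) := fun x hx => by
    have hφf : φ x * -pucciInf lam Lam (hess u x) ≤ |f x| :=
      calc φ x * -pucciInf lam Lam (hess u x) ≤ φ x * |f x| :=
            mul_le_mul_of_nonneg_left ((hsub x hx).trans (le_abs_self _)) φ.nonneg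
        _ ≤ |f x| := mul_le_of_le_one_left (abs_nonneg _) φ.le_one
    rw [mul_left_comm, (hess_isHermitian (hu x hx)).sub_mul_matAbs_eq]
    linarith
  calc (Lam - lam) * ∫ x in s, φ x * matAbs (hess u x)
      = ∫ x in s, (Lam - lam) * (φ x * matAbs (hess u x)) := (integral_const_mul _ _).symm
    _ ≤ ∫ x in s, (2 * |f x| + (Lam + lam) * (φ x * (hess u x).trace)) :=
        setIntegral_mono_on (hφA.const_mul _) ((hf.abs.const_mul 2).add (hφT.const_mul _)) hs hpt
    _ = _ := by
        rw [integral_add (hf.abs.const_mul 2) (hφT.const_mul _), integral_const_mul,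
          integral_const_mul]

end Estimate

theorem stmt6_general (n : ℕ) (lam Lam : ℝ) (hlam : 0 < lam) (hLam : lam < Lam) :
    ∃ C₄ > (0:ℝ),
      ∀ f u : EuclideanSpace ℝ (Fin n) → ℝ,
        ContinuousOn f (ball 0 1) →
        IntegrableOn f (ball 0 1) →
        ContDiffOn ℝ 2 u (ball 0 1) →
        IntegrableOn u (ball 0 1) →
        IntegrableOn (fun x => matAbs (hess u x)) (ball 0 1) →
        (∀ x ∈ ball (0 : EuclideanSpace ℝ (Fin n)) 1,
          -pucciInf lam Lam (hess u x) ≤ f x) →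
        ∫ x in ball (0 : EuclideanSpace ℝ (Fin n)) (1/2), matAbs (hess u x) ≤
          C₄ * ((∫ x in ball (0 : EuclideanSpace ℝ (Fin n)) 1, |f x|) +
            ∫ x in ball (0 : EuclideanSpace ℝ (Fin n)) 1, |u x|) := by
  let φ : ContDiffBump (0 : EuclideanSpace ℝ (Fin n)) := ⟨1/2, 3/4, by norm_num, by norm_num⟩
  obtain ⟨K, hK⟩ := φ.hasCompactSupport.trace_hess.exists_bound_of_continuous
    φ.contDiff.continuous_trace_hess
  have hK0 : 0 ≤ K := (norm_nonneg _).trans (hK 0)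
  refine ⟨(2 + (Lam + lam) * K) / (Lam - lam), by apply div_pos <;> nlinarith, ?_⟩
  intro f u _ hf hu hui hA hsub
  have hmain := φ.sub_mul_setIntegral_mul_matAbs_hess_le measurableSet_ball
    (fun x hx => hu.contDiffAt (isOpen_ball.mem_nhds hx)) hA hf hsub
  have hcut : ∫ x in ball 0 (1/2), matAbs (hess u x) ≤ ∫ x in ball 0 1, φ x * matAbs (hess u x) :=
    φ.setIntegral_ball_rIn_le measurableSet_ball (ball_subset_ball (by norm_num)) hA
      fun x _ => matAbs_nonneg _
  have hibp : ∫ x in ball 0 1, φ x * (hess u x).trace ≤ K * ∫ x in ball 0 1, |u x| := by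
    rw [φ.setIntegral_mul_trace_hess (by norm_num) hu, ← integral_const_mul]
    refine (Real.le_norm_self _).trans (norm_integral_le_of_norm_le (hui.abs.const_mul K)
      (ae_of_all _ fun x => ?_))
    rw [norm_mul, Real.norm_eq_abs, mul_comm]
    exact mul_le_mul_of_nonneg_right (hK x) (abs_nonneg _)
  have hF : 0 ≤ ∫ x in ball 0 1, |f x| := integral_nonneg fun _ => abs_nonneg _
  have hU : 0 ≤ ∫ x in ball 0 1, |u x| := integral_nonneg fun _ => abs_nonneg _
  rw [div_mul_eq_mul_div, le_div_iff₀ (sub_pos.2 hLam)]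
  nlinarith [mul_le_mul_of_nonneg_left hcut (sub_pos.2 hLam).le,
    mul_le_mul_of_nonneg_left hibp (by linarith : 0 ≤ Lam + lam),
    mul_nonneg (mul_nonneg (by linarith : 0 ≤ Lam + lam) hK0) hF]

/-- `W²_1` estimate for subsolutions of `−𝒫⁻(D²u) = f` when `λ < Λ` (Corollary `c1`). -/
theorem stmt6 (n : ℕ) (hn : 1 ≤ n) (lam Lam : ℝ) (hlam : 0 < lam) (hLam : lam < Lam) :
    ∃ C₄ > (0:ℝ),
      ∀ f u : EuclideanSpace ℝ (Fin n) → ℝ,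
        ContinuousOn f (ball 0 1) →
        IntegrableOn f (ball 0 1) →
        ContDiffOn ℝ 2 u (ball 0 1) →
        IntegrableOn u (ball 0 1) →
        IntegrableOn (fun x => matAbs (hess u x)) (ball 0 1) →
        (∀ x ∈ ball (0 : EuclideanSpace ℝ (Fin n)) 1,
          -pucciInf lam Lam (hess u x) ≤ f x) →
        ∫ x in ball (0 : EuclideanSpace ℝ (Fin n)) (1/2), matAbs (hess u x) ≤
          C₄ * ((∫ x in ball (0 : EuclideanSpace ℝ (Fin n)) 1, |f x|) +
            ∫ x in ball (0 : EuclideanSpace ℝ (Fin n)) 1, |u x|) :=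
  stmt6_general n lam Lam hlam hLam
end
end

section
/- Let n ≥ 2 and 0 < λ ≤ Λ with λ(n−1) ≠ Λ, and set θ := 1 − λ(n−1)/Λ. Define U : ℝⁿ \ {0} → ℝ by U(x) = ‖x‖^θ − 1 if θ > 0 and U(x) = 1 − ‖x‖^θ if θ < 0. Then U is C² on B₁ \ {0}, U is not identically zero on B₁ \ {0}, U(x) = 0 for every x ∈ ∂B₁, and 𝒫⁻(D²U(x)) = 0 for every x ∈ B₁ \ {0}; that is, U is a nontrivial solution of the Pucci equation −𝒫⁻(D²U) = 0 in B₁ \ {0} vanishing on ∂B₁. -/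
open MeasureTheory Metric Set ENNReal RealInnerProductSpace

noncomputable section

/-!
For a radial power `u = c ‖x‖ ^ p + d` with `c p > 0` and `x ≠ 0`,
`D²u(x) = c p ‖x‖ ^ (p - 2) (I + (p - 2) x̂ x̂ᵀ)` has the tangential eigenvalue `c p ‖x‖ ^ (p - 2)`
and the radial eigenvalue `c p (p - 1) ‖x‖ ^ (p - 2)`; the trace shows the radial one is simple.
For `p < 1` it is the only negative eigenvalue, so
`𝒫⁻(D²u) = c p ‖x‖ ^ (p - 2) (λ (n - 1) + Λ (p - 1))`, which vanishes exactly at `p = θ`.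
The sign convention in `U` is what makes `c θ > 0`.
-/

open Matrix

theorem Matrix.smul_one_add_smul_vecMulVec_mulVec {ι : Type*} [Fintype ι] [DecidableEq ι]
    (β κ : ℝ) (w v : ι → ℝ) :
    (β • 1 + κ • vecMulVec w w) *ᵥ v = β • v + (κ * (w ⬝ᵥ v)) • w := by
  ext k
  simp [add_mulVec, smul_mulVec, vecMulVec_mulVec]
  ring

theorem Matrix.IsHermitian.eigenvalues_eq_or_eq_of_eq_smul_one_add_smul_vecMulVec
    {ι : Type*} [Fintype ι] [DecidableEq ι] {M : Matrix ι ι ℝ} (hM : M.IsHermitian)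
    {β κ : ℝ} {w : ι → ℝ} (hMw : M = β • 1 + κ • vecMulVec w w) (i : ι) :
    hM.eigenvalues i = β ∨ hM.eigenvalues i = β + κ * (w ⬝ᵥ w) := by
  set μ := hM.eigenvalues i
  set v := (hM.eigenvectorBasis i).ofLp
  have hv : v ≠ 0 := fun h =>
    hM.eigenvectorBasis.orthonormal.ne_zero i (by rw [← WithLp.ofLp_eq_zero]; exact h)
  have hMv : (μ - β) • v = (κ * (w ⬝ᵥ v)) • w := by
    have h : M *ᵥ v = μ • v := hM.mulVec_eigenvectorBasis i
    rw [hMw, smul_one_add_smul_vecMulVec_mulVec] at h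
    rw [sub_smul, ← h, add_sub_cancel_left]
  by_cases hwv : w ⬝ᵥ v = 0
  · left
    rw [hwv, mul_zero, zero_smul, smul_eq_zero] at hMv
    exact sub_eq_zero.mp (hMv.resolve_right hv)
  · right
    have h := congrArg (w ⬝ᵥ ·) hMv
    simp only [dotProduct_smul, smul_eq_mul] at h
    have : (μ - β) * (w ⬝ᵥ v) = (κ * (w ⬝ᵥ w)) * (w ⬝ᵥ v) := by linear_combination h
    linear_combination mul_right_cancel₀ hwv this

theorem mul_max_zero_eq_of_eq_or_eq {a b t : ℝ} (ha : a ≤ 0) (hb : 0 ≤ b) (ht : t = a ∨ t = b) :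
    (b - a) * max t 0 = b * (t - a) ∧ (b - a) * max (-t) 0 = -a * (b - t) := by
  rcases ht with rfl | rfl <;> constructor <;> simp [ha, hb] <;> ring

/-- On `{a, b}` with `a ≤ 0 ≤ b`, both `max t 0` and `max (-t) 0` are affine in `t`, so their sums
over the spectrum are determined by the trace. -/
theorem pucciInf_eq_of_eigenvalues_eq_or_eq {n : ℕ} {M : Matrix (Fin n) (Fin n) ℝ}
    (hM : M.IsHermitian) (lam Lam : ℝ) {a b : ℝ} (ha : a ≤ 0) (hb : 0 ≤ b) (hab : a < b)
    (heig : ∀ i, hM.eigenvalues i = a ∨ hM.eigenvalues i = b)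
    (htr : M.trace = a + (n - 1) * b) :
    pucciInf lam Lam M = lam * (n - 1) * b + Lam * a := by
  have hsum : ∑ i, hM.eigenvalues i = a + (n - 1) * b := by
    rw [← htr, hM.trace_eq_sum_eigenvalues]
    simp
  have hpos : (b - a) * ∑ i, max (hM.eigenvalues i) 0 = (b - a) * ((n - 1) * b) := by
    rw [Finset.mul_sum, Finset.sum_congr rfl fun i _ =>
      (mul_max_zero_eq_of_eq_or_eq ha hb (heig i)).1, ← Finset.mul_sum, Finset.sum_sub_distrib,
      hsum]
    simp only [Finset.sum_const, Finset.card_univ, Fintype.card_fin, nsmul_eq_mul]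
    ring
  have hneg : (b - a) * ∑ i, max (-hM.eigenvalues i) 0 = (b - a) * -a := by
    rw [Finset.mul_sum, Finset.sum_congr rfl fun i _ =>
      (mul_max_zero_eq_of_eq_or_eq ha hb (heig i)).2, ← Finset.mul_sum, Finset.sum_sub_distrib,
      hsum]
    simp only [Finset.sum_const, Finset.card_univ, Fintype.card_fin, nsmul_eq_mul]
    ring
  have hba : b - a ≠ 0 := sub_ne_zero.mpr hab.ne'
  rw [pucciInf, dif_pos hM, mul_left_cancel₀ hba hpos, mul_left_cancel₀ hba hneg]
  ring

theorem pucciInf_smul_one_add_smul_vecMulVec {n : ℕ} (lam Lam : ℝ) {β κ : ℝ} {w : Fin n → ℝ}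
    (hβ : 0 ≤ β) (hκ : β + κ * (w ⬝ᵥ w) < 0) :
    pucciInf lam Lam (β • 1 + κ • vecMulVec w w) =
      lam * (n - 1) * β + Lam * (β + κ * (w ⬝ᵥ w)) := by
  have hM : (β • 1 + κ • vecMulVec w w).IsHermitian := by
    ext i j
    simp [vecMulVec_apply, one_apply, eq_comm, mul_comm]
  refine pucciInf_eq_of_eigenvalues_eq_or_eq hM lam Lam hκ.le hβ (hκ.trans_le hβ) (fun i => ?_) ?_
  · exact (hM.eigenvalues_eq_or_eq_of_eq_smul_one_add_smul_vecMulVec rfl i).symm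
  · simp only [trace_add, trace_smul, trace_one, Fintype.card_fin, smul_eq_mul, trace_vecMulVec]
    ring

section RadialPower

variable {E : Type*} [NormedAddCommGroup E] [InnerProductSpace ℝ E]

theorem hasStrictFDerivAt_norm_rpow_of_ne_zero (p : ℝ) {x : E} (hx : x ≠ 0) :
    HasStrictFDerivAt (fun z : E ↦ ‖z‖ ^ p) ((p * ‖x‖ ^ (p - 2)) • innerSL ℝ x) x := by
  have h := (hasStrictFDerivAt_norm_sq x).rpow_const (p := p / 2) (by simp [hx])
  convert h using 1
  · ext z
    rw [← Real.rpow_natCast_mul (norm_nonneg _)]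
    ring_nf
  · rw [← Real.rpow_natCast_mul (norm_nonneg _), ← Nat.cast_smul_eq_nsmul ℝ, smul_smul]
    ring_nf

theorem contDiffOn_const_mul_norm_rpow_add (k : WithTop ℕ∞) (c p d : ℝ) :
    ContDiffOn ℝ k (fun z : E ↦ c * ‖z‖ ^ p + d) {0}ᶜ := fun x hx =>
  ((contDiffAt_const.mul ((Real.contDiffAt_rpow_const_of_ne (norm_ne_zero_iff.mpr hx)).comp x
    (contDiffAt_norm ℝ hx))).add contDiffAt_const).contDiffWithinAt

theorem exists_mem_ball_const_mul_norm_rpow_sub_ne_zero [Nontrivial E] {c p : ℝ} (hc : c ≠ 0)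
    (hp : p ≠ 0) : ∃ x ∈ ball (0 : E) 1 \ {0}, c * ‖x‖ ^ p + -c ≠ 0 := by
  obtain ⟨v, hv⟩ := exists_norm_eq E (by norm_num : (0 : ℝ) ≤ 1 / 2)
  refine ⟨v, ⟨by rw [mem_ball_zero_iff, hv]; norm_num, fun h0 => ?_⟩, fun h => ?_⟩
  · rw [mem_singleton_iff.mp h0, norm_zero] at hv
    norm_num at hv
  · have : ((1 : ℝ) / 2) ^ p = (1 / 2) ^ (0 : ℝ) := by
      rw [Real.rpow_zero, ← hv]
      exact mul_left_cancel₀ hc (by linear_combination h)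
    exact hp ((Real.rpow_right_inj (by norm_num) (by norm_num)).mp this)

end RadialPower

theorem hess_const_mul_norm_rpow_add {n : ℕ} (c p d : ℝ) {x : EuclideanSpace ℝ (Fin n)}
    (hx : x ≠ 0) :
    hess (fun z => c * ‖z‖ ^ p + d) x =
      (c * p * ‖x‖ ^ (p - 2)) • 1 +
        (c * p * (p - 2) * ‖x‖ ^ (p - 4)) • vecMulVec x.ofLp x.ofLp := by
  have hgrad : ∀ y : EuclideanSpace ℝ (Fin n), y ≠ 0 → ∀ j,
      fderiv ℝ (fun z => c * ‖z‖ ^ p + d) y (EuclideanSpace.single j 1) =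
        c * p * (‖y‖ ^ (p - 2) * y j) := by
    intro y hy j
    rw [(((hasStrictFDerivAt_norm_rpow_of_ne_zero p hy).hasFDerivAt.const_mul c).add_const
      d).fderiv]
    simp only [_root_.smul_apply, coe_innerSL_apply,
      EuclideanSpace.inner_single_right, Real.ringHom_apply, one_mul, smul_eq_mul]
    ring
  ext i j
  have hev : (fun y => fderiv ℝ (fun z => c * ‖z‖ ^ p + d) y (EuclideanSpace.single j 1))
      =ᶠ[nhds x] fun y => c * p * (‖y‖ ^ (p - 2) * y j) :=
    (eventually_ne_nhds hx).mono fun y hy => hgrad y hy j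
  have hderiv := (((hasStrictFDerivAt_norm_rpow_of_ne_zero (p - 2) hx).hasFDerivAt.mul
    (EuclideanSpace.proj (𝕜 := ℝ) j).hasFDerivAt).const_mul (c * p))
  simp only [Pi.mul_apply, PiLp.proj_apply] at hderiv
  rw [hess, hev.fderiv_eq, hderiv.fderiv]
  simp only [smul_add, _root_.add_apply, _root_.smul_apply,
    PiLp.proj_apply, PiLp.single_apply, eq_comm, smul_eq_mul, mul_ite, mul_one, mul_zero,
    coe_innerSL_apply, EuclideanSpace.inner_single_right, Real.ringHom_apply, one_mul,
    Matrix.add_apply, Matrix.smul_apply, one_apply, vecMulVec_apply]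
  ring_nf

theorem pucciInf_hess_const_mul_norm_rpow_add {n : ℕ} (lam Lam : ℝ) {c p : ℝ} (d : ℝ)
    {x : EuclideanSpace ℝ (Fin n)} (hx : x ≠ 0) (hcp : 0 < c * p) (hp : p < 1) :
    pucciInf lam Lam (hess (fun z => c * ‖z‖ ^ p + d) x) =
      c * p * ‖x‖ ^ (p - 2) * (lam * (n - 1) + Lam * (p - 1)) := by
  have hxpos : 0 < ‖x‖ := norm_pos_iff.mpr hx
  have hdot : x.ofLp ⬝ᵥ x.ofLp = ‖x‖ ^ 2 := by
    rw [← real_inner_self_eq_norm_sq, EuclideanSpace.inner_eq_star_dotProduct, star_trivial]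
  have hpow : ‖x‖ ^ (p - 4) * ‖x‖ ^ 2 = ‖x‖ ^ (p - 2) := by
    rw [← Real.rpow_natCast, ← Real.rpow_add hxpos]
    ring_nf
  have hκ : c * p * ‖x‖ ^ (p - 2) + c * p * (p - 2) * ‖x‖ ^ (p - 4) * (x.ofLp ⬝ᵥ x.ofLp) =
      c * p * (p - 1) * ‖x‖ ^ (p - 2) := by
    rw [hdot, mul_assoc _ (‖x‖ ^ (p - 4)), hpow]
    ring
  have hβ : 0 < c * p * ‖x‖ ^ (p - 2) := by positivity
  rw [hess_const_mul_norm_rpow_add c p d hx,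
    pucciInf_smul_one_add_smul_vecMulVec lam Lam hβ.le (by rw [hκ]; nlinarith), hκ]
  ring

/-- `U_θ` with `θ = 1 − λ(n−1)/Λ` is a nontrivial solution of `−𝒫⁻(D²U) = 0` in
`B₁ \ {0}` vanishing on `∂B₁` (Remark after Proposition `P1`). -/
theorem stmt13 (n : ℕ) (hn : 2 ≤ n) (lam Lam : ℝ) (hlam : 0 < lam) (hLam : lam ≤ Lam)
    (hne : lam * (n - 1) ≠ Lam)
    (θ : ℝ) (hθ : θ = 1 - lam * (n - 1) / Lam)
    (U : EuclideanSpace ℝ (Fin n) → ℝ)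
    (hU : ∀ x : EuclideanSpace ℝ (Fin n),
      U x = if 0 < θ then ‖x‖ ^ θ - 1 else 1 - ‖x‖ ^ θ) :
    ContDiffOn ℝ 2 U (ball 0 1 \ {0}) ∧
    (¬ ∀ x ∈ ball (0 : EuclideanSpace ℝ (Fin n)) 1 \ {0}, U x = 0) ∧
    (∀ x ∈ sphere (0 : EuclideanSpace ℝ (Fin n)) 1, U x = 0) ∧
    (∀ x ∈ ball (0 : EuclideanSpace ℝ (Fin n)) 1 \ {0},
      pucciInf lam Lam (hess U x) = 0) := by
  have hLam0 : 0 < Lam := hlam.trans_le hLam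
  have hn1 : (1 : ℝ) < n := by exact_mod_cast hn
  have hθ1 : θ < 1 := by
    rw [hθ, sub_lt_self_iff]
    exact div_pos (mul_pos hlam (sub_pos.mpr hn1)) hLam0
  have hθ0 : θ ≠ 0 := by
    rw [hθ, sub_ne_zero, ne_comm, ne_eq, div_eq_one_iff_eq hLam0.ne']
    exact hne
  have hpucci : lam * (n - 1) + Lam * (θ - 1) = 0 := by
    rw [hθ]
    field_simp
    ring
  obtain ⟨σ, hσθ, rfl⟩ : ∃ σ : ℝ, 0 < σ * θ ∧ U = fun z => σ * ‖z‖ ^ θ + -σ := by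
    rcases hθ0.lt_or_gt with hneg | hpos
    · exact ⟨-1, by linarith, funext fun z => by simp [hU, hneg.not_gt]; ring⟩
    · exact ⟨1, by linarith, funext fun z => by simp [hU, hpos]; ring⟩
  have : Nonempty (Fin n) := ⟨⟨0, by omega⟩⟩
  refine ⟨(contDiffOn_const_mul_norm_rpow_add 2 σ θ (-σ)).mono fun x hx => hx.2, fun h => ?_,
    fun x hx => by simp [mem_sphere_zero_iff_norm.mp hx], fun x hx => ?_⟩
  · obtain ⟨x, hx, hUx⟩ := exists_mem_ball_const_mul_norm_rpow_sub_ne_zero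
      (E := EuclideanSpace ℝ (Fin n)) (left_ne_zero_of_mul hσθ.ne') hθ0
    exact hUx (h x hx)
  · rw [pucciInf_hess_const_mul_norm_rpow_add lam Lam _ hx.2 hσθ hθ1, hpucci, mul_zero]
end
end
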